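/- arXiv:2110.14637 — 6 statements merged into one kernel-verified Lean document; each statement's English description precedes it below -/
import Mathlib

section
/- Let X be a geodesic metric space, p, q ∈ X, and γ : [0,T] → X a continuous (λ,ε)-quasi-geodesic. Let γ(t) be a point on γ closest to p and α a geodesic from p to γ(t). Then the concatenation α · γ[t,T] is a (3λ,ε)-quasi-geodesic. -/
open Set

/-- A Morse gauge: a function `[1,∞) × [0,∞) → [0,∞)` (modelled on all of `ℝ × ℝ`). -/
abbrev MorseGauge := ℝ → ℝ → ℝ

variable {X : Type*} [MetricSpace X]

/-- `γ` is a `(L, e)`-quasi-geodesic on the parameter set `s`. -/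
def IsQGOn (L e : ℝ) (γ : ℝ → X) (s : Set ℝ) : Prop :=
  ∀ t ∈ s, ∀ u ∈ s,
    (1 / L) * |t - u| - e ≤ dist (γ t) (γ u) ∧ dist (γ t) (γ u) ≤ L * |t - u| + e

/-- `γ` is a geodesic (unit-speed) on the parameter set `s`. -/
def IsGeodesicOn (γ : ℝ → X) (s : Set ℝ) : Prop :=
  ∀ t ∈ s, ∀ u ∈ s, dist (γ t) (γ u) = |t - u|

/-- `X` is a geodesic metric space. -/
def GeodesicSpace (X : Type*) [MetricSpace X] : Prop :=
  ∀ x y : X, ∃ γ : ℝ → X, γ 0 = x ∧ γ (dist x y) = y ∧ IsGeodesicOn γ (Icc 0 (dist x y))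

/-- if `γ : [0,T] → X` is a continuous `(L,e)`-quasi-geodesic, `γ t` is a point
of `γ` closest to `p` and `α` is a geodesic from `p` to `γ t`, then the concatenation
`α · γ[t,T]` is a `(3L, e)`-quasi-geodesic. -/
theorem stmt0 {X : Type*} [MetricSpace X] (hX : GeodesicSpace X)
    (L e T t : ℝ) (hL : 1 ≤ L) (he : 0 ≤ e) (ht : t ∈ Icc 0 T)
    (p : X) (γ α : ℝ → X)
    (hγqg : IsQGOn L e γ (Icc 0 T)) (hγc : ContinuousOn γ (Icc 0 T))
    (hclosest : ∀ u ∈ Icc (0:ℝ) T, dist p (γ t) ≤ dist p (γ u))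
    (hα0 : α 0 = p) (hαend : α (dist p (γ t)) = γ t)
    (hαgeo : IsGeodesicOn α (Icc 0 (dist p (γ t)))) :
    IsQGOn (3 * L) e
      (fun s => if s ≤ dist p (γ t) then α s else γ (s - dist p (γ t) + t))
      (Icc 0 (dist p (γ t) + (T - t))) := by

  intro a ha b hb
  set d := dist p (γ t) with hdd
  have hd : 0 ≤ d := dist_nonneg
  have hL0 : (0:ℝ) < L := lt_of_lt_of_le one_pos hL
  have h3L : (0:ℝ) < 3 * L := by linarith
  have hinv : 1 / (3 * L) ≤ 1 / L := by
    apply one_div_le_one_div_of_le hL0; linarith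
  have hinv1 : 1 / (3 * L) ≤ 1 := by
    rw [div_le_one h3L]; linarith
  have hinvpos : 0 < 1 / (3 * L) := by positivity
  have key : ∀ s ∈ Icc 0 (d + (T - t)), ∀ u ∈ Icc 0 (d + (T - t)), s ≤ u →
      (1 / (3 * L)) * (u - s) - e ≤
        dist ((fun s => if s ≤ d then α s else γ (s - d + t)) s)
             ((fun s => if s ≤ d then α s else γ (s - d + t)) u) ∧
      dist ((fun s => if s ≤ d then α s else γ (s - d + t)) s)
           ((fun s => if s ≤ d then α s else γ (s - d + t)) u) ≤ 3 * L * (u - s) + e := by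
    intro s hs u hu hsu
    simp only []
    by_cases hu' : u ≤ d
    · have hs' : s ≤ d := le_trans hsu hu'
      rw [if_pos hs', if_pos hu']
      have := hαgeo s ⟨hs.1, hs'⟩ u ⟨hu.1, hu'⟩
      rw [this, abs_of_nonpos (by linarith)]
      constructor
      · nlinarith
      · nlinarith
    · push_neg at hu'
      rw [if_neg (not_le.mpr hu')]
      have huIcc : u - d + t ∈ Icc 0 T := ⟨by linarith [ht.1], by linarith [hu.2]⟩
      have hγtu := hγqg t ht (u - d + t) huIcc
      have habs : |t - (u - d + t)| = u - d := by
        rw [abs_of_nonpos (by linarith)]; ring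
      rw [habs] at hγtu
      by_cases hs' : s ≤ d
      · rw [if_pos hs']
        have hαs : dist (α s) (γ t) = d - s := by
          have := hαgeo s ⟨hs.1, hs'⟩ d ⟨hd, le_refl d⟩
          rw [hαend] at this
          rw [this, abs_of_nonpos (by linarith)]; ring
        have hps : dist p (α s) = s := by
          have := hαgeo 0 ⟨le_refl 0, hd⟩ s ⟨hs.1, hs'⟩
          rw [hα0] at this
          rw [this, abs_of_nonpos (by linarith [hs.1])]; ring
        have hclose := hclosest (u - d + t) huIcc
        have htri1 : dist p (γ (u - d + t)) ≤ dist p (α s) + dist (α s) (γ (u - d + t)) :=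
          dist_triangle _ _ _
        have htri2 : dist (γ t) (γ (u - d + t)) ≤ dist (γ t) (α s) + dist (α s) (γ (u - d + t)) :=
          dist_triangle _ _ _
        have htri3 : dist (α s) (γ (u - d + t)) ≤ dist (α s) (γ t) + dist (γ t) (γ (u - d + t)) :=
          dist_triangle _ _ _
        rw [dist_comm (γ t) (α s)] at htri2
        constructor
        · -- lower bound: 3D ≥ 2D + D ≥ (1/L)(u-d) - e + (d - s)
          have h1 : d - s ≤ dist (α s) (γ (u - d + t)) := by
            rw [hps] at htri1; linarith
          have h2 : (1 / L) * (u - d) - e - (d - s) ≤ dist (α s) (γ (u - d + t)) := by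
            rw [hαs] at htri2; linarith [hγtu.1]
          have hLL : (1 / (3 * L)) * (u - s) ≤ (1 / L) * (u - d) / 3 + (d - s) / 3 := by
            have h3 : (1:ℝ) / (3 * L) = (1 / L) / 3 := by
              rw [one_div, one_div, mul_inv, div_eq_mul_inv]; ring
            have e1 : (1 / (3 * L)) * (u - s) = (1/L) * (u - d) / 3 + (1/L) * (d - s) / 3 := by
              rw [h3]; ring
            have e2 : (1/L) * (d - s) ≤ d - s := by
              have : 1 / L ≤ 1 := by rw [div_le_one hL0]; exact hL
              nlinarith
            linarith
          linarith
        · rw [hαs] at htri3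
          have := hγtu.2
          nlinarith
      · push_neg at hs'
        rw [if_neg (not_le.mpr hs')]
        have hsIcc : s - d + t ∈ Icc 0 T := ⟨by linarith [ht.1], by linarith [hs.2]⟩
        have h := hγqg (s - d + t) hsIcc (u - d + t) huIcc
        have habs2 : |s - d + t - (u - d + t)| = u - s := by
          rw [abs_of_nonpos (by linarith)]; ring
        rw [habs2] at h
        constructor
        · nlinarith [h.1]
        · nlinarith [h.2]
  rcases le_total a b with hab | hab
  · have := key a ha b hb hab
    rw [abs_of_nonpos (by linarith)]
    constructor
    · have := this.1; linarith
    · have := this.2; linarith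
  · have := key b hb a ha hab
    rw [abs_of_nonneg (by linarith), dist_comm]
    constructor
    · have := this.1; linarith
    · have := this.2; linarith
end

section
/- Let X be a geodesic metric space, p,q ∈ X, and γ : [0,T] → X a continuous (λ,ε)-quasi-geodesic. Let γ(t), γ(t′) be points on γ closest to p and q respectively, with t ≤ t′, and let α be a geodesic from p to γ(t), β a geodesic from γ(t′) to q. If |t − t′| ≥ 3λ(d(p,γ(t)) + d(q,γ(t′))), then α · γ[t,t′] · β is a (3λ,ε)-quasi-geodesic. -/
open Set

variable {X : Type*} [MetricSpace X]

lemma div_lower' {c A D e : ℝ} (hc : 0 < c) (h : A - c * e ≤ c * D) :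
    (1 / c) * A - e ≤ D := by
  rw [sub_le_iff_le_add, one_div_mul_eq_div, div_le_iff₀ hc]
  nlinarith

lemma div_unlower' {c A D e : ℝ} (hc : 0 < c) (h : (1 / c) * A - e ≤ D) :
    A - c * e ≤ c * D := by
  rw [sub_le_iff_le_add, one_div_mul_eq_div, div_le_iff₀ hc] at h
  nlinarith


set_option maxHeartbeats 1000000 in
lemma concat_main {X : Type*} [MetricSpace X]
    (L e t t' a b : ℝ) (hL : 1 ≤ L) (he : 0 ≤ e) (htt' : t ≤ t')
    (ha0 : 0 ≤ a) (hb0 : 0 ≤ b)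
    (hfar' : 3 * L * (a + b) ≤ t' - t)
    (p q : X) (γ α β F : ℝ → X)
    (hF1 : ∀ v : ℝ, v ≤ a → F v = α v)
    (hF2 : ∀ v : ℝ, ¬ v ≤ a → v ≤ a + (t' - t) → F v = γ (v - a + t))
    (hF3 : ∀ v : ℝ, ¬ v ≤ a → ¬ v ≤ a + (t' - t) → F v = β (v - a - (t' - t)))
    (hαgeo : IsGeodesicOn α (Icc 0 a)) (hβgeo : IsGeodesicOn β (Icc 0 b))
    (hαp : ∀ v ∈ Icc (0:ℝ) a, dist p (α v) = v)
    (hαγ : ∀ v ∈ Icc (0:ℝ) a, dist (α v) (γ t) = a - v)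
    (hβγ : ∀ y ∈ Icc (0:ℝ) b, dist (γ t') (β y) = y)
    (hβq : ∀ y ∈ Icc (0:ℝ) b, dist (β y) q = b - y)
    (hpfar : ∀ x : ℝ, t ≤ x → x ≤ t' → a ≤ dist p (γ x))
    (hqfar : ∀ x : ℝ, t ≤ x → x ≤ t' → b ≤ dist q (γ x))
    (hγlow : ∀ x₁, t ≤ x₁ → ∀ x₂, x₁ ≤ x₂ → x₂ ≤ t' →
      (x₂ - x₁) - L * e ≤ L * dist (γ x₁) (γ x₂))
    (hγup : ∀ x₁, t ≤ x₁ → ∀ x₂, x₁ ≤ x₂ → x₂ ≤ t' →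
      dist (γ x₁) (γ x₂) ≤ L * (x₂ - x₁) + e) :
    ∀ v ∈ Icc (0:ℝ) (a + (t' - t) + b), ∀ w ∈ Icc (0:ℝ) (a + (t' - t) + b),
      v ≤ w → (1 / (3 * L)) * (w - v) - e ≤ dist (F v) (F w) ∧
        dist (F v) (F w) ≤ 3 * L * (w - v) + e := by
  have hL0 : (0:ℝ) < L := lt_of_lt_of_le one_pos hL
  have h3L : (0:ℝ) < 3 * L := by linarith
  have hΔ0 : 0 ≤ t' - t := by linarith
  intro v hv w hw hvw
  rcases le_or_gt v a with hv1 | hv1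
  · rcases le_or_gt w a with hw1 | hw1
    · -- both on α
      rw [hF1 v hv1, hF1 w hw1]
      have hd := hαgeo v ⟨hv.1, hv1⟩ w ⟨hw.1, hw1⟩
      rw [abs_sub_comm, abs_of_nonneg (by linarith)] at hd
      rw [hd]
      constructor
      · refine div_lower' h3L ?_
        linarith [mul_nonneg (sub_nonneg.2 hL) (sub_nonneg.2 hvw),
          mul_nonneg hL0.le (sub_nonneg.2 hvw), mul_nonneg hL0.le he]
      · linarith [mul_nonneg (sub_nonneg.2 hL) (sub_nonneg.2 hvw),
          mul_nonneg hL0.le (sub_nonneg.2 hvw)]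
    · rcases le_or_gt w (a + (t' - t)) with hw2 | hw2
      · -- v on α, w on middle
        rw [hF1 v hv1, hF2 w (not_le.2 hw1) hw2]
        set x := w - a + t with hx_def
        clear_value x
        have hx1 : t ≤ x := by simp only [hx_def]; linarith
        have hx2 : x ≤ t' := by simp only [hx_def]; linarith
        have hvIcc : v ∈ Icc (0:ℝ) a := ⟨hv.1, hv1⟩
        have hDa : a - v ≤ dist (α v) (γ x) := by
          have h1 := hpfar x hx1 hx2
          have h2 := dist_triangle p (α v) (γ x)
          rw [hαp v hvIcc] at h2
          linarith
        have hDγ : dist (γ t) (γ x) - (a - v) ≤ dist (α v) (γ x) := by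
          have h2 := dist_triangle (γ t) (α v) (γ x)
          rw [dist_comm (γ t) (α v), hαγ v hvIcc] at h2
          linarith
        have hlow := hγlow t le_rfl x (by linarith) hx2
        have hup := hγup t le_rfl x (by linarith) hx2
        constructor
        · refine div_lower' h3L ?_
          have k1 := mul_le_mul_of_nonneg_left hDa hL0.le
          have k2 := mul_le_mul_of_nonneg_left hDγ hL0.le
          have k3 : (0:ℝ) ≤ (L - 1) * (a - v) :=
            mul_nonneg (by linarith) (by linarith)
          have k4 : (0:ℝ) ≤ L * e := mul_nonneg hL0.le he
          nlinarith [k1, k2, hlow, k3, k4]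
        · have h2 := dist_triangle (α v) (γ t) (γ x)
          rw [hαγ v hvIcc] at h2
          have k3 : (0:ℝ) ≤ (L - 1) * (a - v) :=
            mul_nonneg (by linarith) (by linarith)
          have k1 : (0:ℝ) ≤ L * (w - a) := mul_nonneg hL0.le (by linarith)
          have k2 : (0:ℝ) ≤ L * (a - v) := mul_nonneg hL0.le (by linarith)
          nlinarith [hup, h2, k1, k2, k3]
      · -- v on α, w on β
        rw [hF1 v hv1, hF3 w (not_le.2 hw1) (not_le.2 hw2)]
        set y := w - a - (t' - t) with hy_def
        clear_value y
        have hy0 : 0 ≤ y := by simp only [hy_def]; linarith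
        have hyb : y ≤ b := by simp only [hy_def]; linarith [hw.2]
        have hvIcc : v ∈ Icc (0:ℝ) a := ⟨hv.1, hv1⟩
        have hyIcc : y ∈ Icc (0:ℝ) b := ⟨hy0, hyb⟩
        have htri : dist (γ t) (γ t') ≤ (a - v) + dist (α v) (β y) + y := by
          have h2 := dist_triangle4 (γ t) (α v) (β y) (γ t')
          rw [dist_comm (γ t) (α v), hαγ v hvIcc, dist_comm (β y) (γ t'), hβγ y hyIcc] at h2
          linarith
        have hlow := hγlow t le_rfl t' htt' le_rfl
        have hup := hγup t le_rfl t' htt' le_rfl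
        constructor
        · refine div_lower' h3L ?_
          have k1 := mul_le_mul_of_nonneg_left htri hL0.le
          have k2 : (0:ℝ) ≤ L * v := mul_nonneg hL0.le hv.1
          have k3 : (0:ℝ) ≤ L * (b - y) := mul_nonneg hL0.le (by linarith)
          have k4 : (0:ℝ) ≤ L * e := mul_nonneg hL0.le he
          have k5 : (0:ℝ) ≤ (L - 1) * (a - v + y) :=
            mul_nonneg (by linarith) (by linarith)
          nlinarith [k1, hlow, hfar', k2, k3, k4, k5, hv.1]
        · have h2 := dist_triangle4 (α v) (γ t) (γ t') (β y)
          rw [hαγ v hvIcc, hβγ y hyIcc] at h2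
          have k1 : (0:ℝ) ≤ (L - 1) * (a - v) :=
            mul_nonneg (by linarith) (by linarith)
          have k2 : (0:ℝ) ≤ L * (t' - t) := mul_nonneg hL0.le hΔ0
          have k3 : (0:ℝ) ≤ L * y := mul_nonneg hL0.le hy0
          have k4 : (0:ℝ) ≤ (L - 1) * y := mul_nonneg (by linarith) hy0
          have k5 : (0:ℝ) ≤ L * (a - v) := mul_nonneg hL0.le (by linarith)
          nlinarith [hup, h2, k1, k2, k3, k4, k5]
  · rcases le_or_gt v (a + (t' - t)) with hv2 | hv2
    · rcases le_or_gt w (a + (t' - t)) with hw2 | hw2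
      · -- both middle
        have hw1 : ¬ w ≤ a := not_le.2 (lt_of_lt_of_le hv1 hvw)
        rw [hF2 v (not_le.2 hv1) hv2, hF2 w hw1 hw2]
        set x₁ := v - a + t with hx1_def
        set x₂ := w - a + t with hx2_def
        clear_value x₁ x₂
        have h1 : t ≤ x₁ := by simp only [hx1_def]; linarith
        have h2 : x₁ ≤ x₂ := by simp only [hx1_def, hx2_def]; linarith
        have h3 : x₂ ≤ t' := by simp only [hx2_def]; linarith
        have hlow := hγlow x₁ h1 x₂ h2 h3
        have hup := hγup x₁ h1 x₂ h2 h3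
        have hx : x₂ - x₁ = w - v := by simp only [hx1_def, hx2_def]; ring
        rw [hx] at hlow hup
        constructor
        · refine div_lower' h3L ?_
          have k1 : (0:ℝ) ≤ L * dist (γ x₁) (γ x₂) :=
            mul_nonneg hL0.le dist_nonneg
          have k2 : (0:ℝ) ≤ L * e := mul_nonneg hL0.le he
          linarith [hlow, k1, k2, hvw]
        · have k1 : (0:ℝ) ≤ L * (w - v) := mul_nonneg hL0.le (by linarith)
          linarith [hup, k1]
      · -- v middle, w on β
        rw [hF2 v (not_le.2 hv1) hv2, hF3 w (not_le.2 (by linarith)) (not_le.2 hw2)]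
        set x := v - a + t with hx_def
        set y := w - a - (t' - t) with hy_def
        clear_value x y
        have hx1 : t ≤ x := by simp only [hx_def]; linarith
        have hx2 : x ≤ t' := by simp only [hx_def]; linarith
        have hy0 : 0 ≤ y := by simp only [hy_def]; linarith
        have hyb : y ≤ b := by simp only [hy_def]; linarith [hw.2]
        have hyIcc : y ∈ Icc (0:ℝ) b := ⟨hy0, hyb⟩
        have hDy : y ≤ dist (γ x) (β y) := by
          have h1 := hqfar x hx1 hx2
          have h2 := dist_triangle q (β y) (γ x)
          rw [dist_comm q (β y), hβq y hyIcc, dist_comm (β y) (γ x)] at h2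
          linarith
        have hDγ : dist (γ x) (γ t') - y ≤ dist (γ x) (β y) := by
          have h2 := dist_triangle (γ x) (β y) (γ t')
          rw [dist_comm (β y) (γ t'), hβγ y hyIcc] at h2
          linarith
        have hlow := hγlow x hx1 t' hx2 le_rfl
        have hup := hγup x hx1 t' hx2 le_rfl
        constructor
        · refine div_lower' h3L ?_
          have k1 := mul_le_mul_of_nonneg_left hDy hL0.le
          have k2 := mul_le_mul_of_nonneg_left hDγ hL0.le
          have k3 : (0:ℝ) ≤ (L - 1) * y := mul_nonneg (by linarith) hy0
          have k4 : (0:ℝ) ≤ L * e := mul_nonneg hL0.le he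
          nlinarith [k1, k2, hlow, k3, k4]
        · have h2 := dist_triangle (γ x) (γ t') (β y)
          rw [hβγ y hyIcc] at h2
          have k3 : (0:ℝ) ≤ (L - 1) * y := mul_nonneg (by linarith) hy0
          have k1 : (0:ℝ) ≤ L * (t' - x) := mul_nonneg hL0.le (by linarith)
          have k2 : (0:ℝ) ≤ L * y := mul_nonneg hL0.le hy0
          nlinarith [hup, h2, k1, k2, k3]
    · -- both on β
      have hw2 : ¬ w ≤ a + (t' - t) := not_le.2 (lt_of_lt_of_le hv2 hvw)
      rw [hF3 v (not_le.2 hv1) (not_le.2 hv2), hF3 w (not_le.2 (by linarith)) hw2]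
      set y₁ := v - a - (t' - t) with hy1_def
      set y₂ := w - a - (t' - t) with hy2_def
      clear_value y₁ y₂
      have hy1 : y₁ ∈ Icc (0:ℝ) b := ⟨by simp only [hy1_def]; linarith, by
        simp only [hy1_def]; linarith [hv.2]⟩
      have hy2 : y₂ ∈ Icc (0:ℝ) b := ⟨by simp only [hy2_def]; linarith, by
        simp only [hy2_def]; linarith [hw.2]⟩
      have hd := hβgeo y₁ hy1 y₂ hy2
      rw [abs_sub_comm, abs_of_nonneg (by simp only [hy1_def, hy2_def]; linarith)] at hd
      have hy : y₂ - y₁ = w - v := by simp only [hy1_def, hy2_def]; ring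
      rw [hy] at hd
      rw [hd]
      constructor
      · refine div_lower' h3L ?_
        linarith [mul_nonneg (sub_nonneg.2 hL) (sub_nonneg.2 hvw),
          mul_nonneg hL0.le (sub_nonneg.2 hvw), mul_nonneg hL0.le he]
      · linarith [mul_nonneg (sub_nonneg.2 hL) (sub_nonneg.2 hvw),
          mul_nonneg hL0.le (sub_nonneg.2 hvw)]

/-- if `γ : [0,T] → X` is a continuous `(L,e)`-quasi-geodesic, `γ t`, `γ t'`
are points of `γ` closest to `p` and `q` respectively with `t ≤ t'`, `α` is a geodesic from
`p` to `γ t`, `β` a geodesic from `γ t'` to `q`, and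
`|t - t'| ≥ 3L (d(p, γ t) + d(q, γ t'))`, then the concatenation `α · γ[t,t'] · β` is a
`(3L, e)`-quasi-geodesic. -/
theorem stmt1 {X : Type*} [MetricSpace X] (hX : GeodesicSpace X)
    (L e T t t' : ℝ) (hL : 1 ≤ L) (he : 0 ≤ e)
    (ht : t ∈ Icc 0 T) (ht' : t' ∈ Icc 0 T) (htt' : t ≤ t')
    (p q : X) (γ α β : ℝ → X)
    (hγqg : IsQGOn L e γ (Icc 0 T)) (hγc : ContinuousOn γ (Icc 0 T))
    (hclosestp : ∀ u ∈ Icc (0:ℝ) T, dist p (γ t) ≤ dist p (γ u))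
    (hclosestq : ∀ u ∈ Icc (0:ℝ) T, dist q (γ t') ≤ dist q (γ u))
    (hα0 : α 0 = p) (hαend : α (dist p (γ t)) = γ t)
    (hαgeo : IsGeodesicOn α (Icc 0 (dist p (γ t))))
    (hβ0 : β 0 = γ t') (hβend : β (dist (γ t') q) = q)
    (hβgeo : IsGeodesicOn β (Icc 0 (dist (γ t') q)))
    (hfar : |t - t'| ≥ 3 * L * (dist p (γ t) + dist q (γ t'))) :
    IsQGOn (3 * L) e
      (fun s =>
        if s ≤ dist p (γ t) then α s
        else if s ≤ dist p (γ t) + (t' - t) then γ (s - dist p (γ t) + t)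
        else β (s - dist p (γ t) - (t' - t)))
      (Icc 0 (dist p (γ t) + (t' - t) + dist (γ t') q)) := by
  have hL0 : (0:ℝ) < L := lt_of_lt_of_le one_pos hL
  have h3L : (0:ℝ) < 3 * L := by linarith
  set a := dist p (γ t) with ha_def
  set b := dist (γ t') q with hb_def
  have hqb : dist q (γ t') = b := dist_comm q (γ t')
  have ha0 : 0 ≤ a := dist_nonneg
  have hb0 : 0 ≤ b := dist_nonneg
  have hΔ0 : 0 ≤ t' - t := by linarith
  have hfar' : 3 * L * (a + b) ≤ t' - t := by
    rw [hqb] at hfar; rw [abs_sub_comm, abs_of_nonneg hΔ0] at hfar; exact hfar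
  set F : ℝ → X := (fun s =>
        if s ≤ a then α s
        else if s ≤ a + (t' - t) then γ (s - a + t)
        else β (s - a - (t' - t))) with hF
  have hF1 : ∀ v : ℝ, v ≤ a → F v = α v := by
    intro v h; simp only [hF]; rw [if_pos h]
  have hF2 : ∀ v : ℝ, ¬ v ≤ a → v ≤ a + (t' - t) → F v = γ (v - a + t) := by
    intro v h1 h2; simp only [hF]; rw [if_neg h1, if_pos h2]
  have hF3 : ∀ v : ℝ, ¬ v ≤ a → ¬ v ≤ a + (t' - t) → F v = β (v - a - (t' - t)) := by
    intro v h1 h2; simp only [hF]; rw [if_neg h1, if_neg h2]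
  clear_value a b F
  clear hF hγc hX ha_def hb_def
  -- membership of middle parameters in [0, T]
  have hmem : ∀ x : ℝ, t ≤ x → x ≤ t' → x ∈ Icc (0:ℝ) T :=
    fun x h1 h2 => ⟨le_trans ht.1 h1, le_trans h2 ht'.2⟩
  -- distances along α
  have hαp : ∀ v ∈ Icc (0:ℝ) a, dist p (α v) = v := by
    intro v hv
    have := hαgeo 0 ⟨le_refl 0, ha0⟩ v hv
    rw [hα0] at this
    rw [this, abs_sub_comm, sub_zero, abs_of_nonneg hv.1]
  have hαγ : ∀ v ∈ Icc (0:ℝ) a, dist (α v) (γ t) = a - v := by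
    intro v hv
    have := hαgeo v hv a ⟨ha0, le_refl a⟩
    rw [hαend] at this
    rw [this, abs_sub_comm, abs_of_nonneg (by linarith [hv.2])]
  -- distances along β
  have hβγ : ∀ y ∈ Icc (0:ℝ) b, dist (γ t') (β y) = y := by
    intro y hy
    have := hβgeo 0 ⟨le_refl 0, hb0⟩ y hy
    rw [hβ0] at this
    rw [this, abs_sub_comm, sub_zero, abs_of_nonneg hy.1]
  have hβq : ∀ y ∈ Icc (0:ℝ) b, dist (β y) q = b - y := by
    intro y hy
    have := hβgeo y hy b ⟨hb0, le_refl b⟩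
    rw [hβend] at this
    rw [this, abs_sub_comm, abs_of_nonneg (by linarith [hy.2])]
  have hqfar : ∀ x ∈ Icc (0:ℝ) T, b ≤ dist q (γ x) := fun x hx => hqb ▸ hclosestq x hx
  -- quasi-geodesic bounds on γ, with L cleared from denominators
  have hγlow : ∀ x₁, t ≤ x₁ → ∀ x₂, x₁ ≤ x₂ → x₂ ≤ t' →
      (x₂ - x₁) - L * e ≤ L * dist (γ x₁) (γ x₂) := by
    intro x₁ h1 x₂ h2 h3
    have h := (hγqg x₁ (hmem x₁ h1 (le_trans h2 h3)) x₂ (hmem x₂ (le_trans h1 h2) h3)).1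
    rw [abs_sub_comm, abs_of_nonneg (by linarith)] at h
    exact div_unlower' hL0 h
  have hγup : ∀ x₁, t ≤ x₁ → ∀ x₂, x₁ ≤ x₂ → x₂ ≤ t' →
      dist (γ x₁) (γ x₂) ≤ L * (x₂ - x₁) + e := by
    intro x₁ h1 x₂ h2 h3
    have h := (hγqg x₁ (hmem x₁ h1 (le_trans h2 h3)) x₂ (hmem x₂ (le_trans h1 h2) h3)).2
    rw [abs_sub_comm, abs_of_nonneg (by linarith)] at h
    exact h
  have hpfar' : ∀ x : ℝ, t ≤ x → x ≤ t' → a ≤ dist p (γ x) :=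
    fun x h1 h2 => hclosestp x (hmem x h1 h2)
  have hqfar' : ∀ x : ℝ, t ≤ x → x ≤ t' → b ≤ dist q (γ x) :=
    fun x h1 h2 => hqfar x (hmem x h1 h2)
  have main := concat_main L e t t' a b hL he htt' ha0 hb0 hfar' p q γ α β F
    hF1 hF2 hF3 hαgeo hβgeo hαp hαγ hβγ hβq hpfar' hqfar' hγlow hγup
  intro v hv w hw
  rcases le_total v w with h | h
  · rw [abs_sub_comm, abs_of_nonneg (sub_nonneg.2 h)]
    exact main v hv w hw h
  · rw [abs_of_nonneg (sub_nonneg.2 h), dist_comm (F v) (F w)]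
    exact main w hw v hv h
end

section
/- Let ξ : [0,∞) → X be a geodesic ray in a geodesic metric space X such that ξ|[0,T] is M-Morse and ξ|[T,∞) is M′-Morse. Then ξ is M″-Morse for some Morse gauge M″ depending only on M and M′. -/
open Set

variable {X : Type*} [MetricSpace X]

/-- The path `γ` (defined on the parameter set `s`) is `M`-Morse: every `(L,e)`-quasi-geodesic
(`L ≥ 1`, `e ≥ 0`) with endpoints on `γ` stays in the closed `M L e`-neighbourhood of `γ`. -/
def IsMorseOn (M : MorseGauge) (γ : ℝ → X) (s : Set ℝ) : Prop :=
  ∀ L e, 1 ≤ L → 0 ≤ e → ∀ (η : ℝ → X) (a b : ℝ), a ≤ b →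
    IsQGOn L e η (Icc a b) → η a ∈ γ '' s → η b ∈ γ '' s →
    ∀ t ∈ Icc a b, ∃ u ∈ s, dist (η t) (γ u) ≤ M L e

/-- To check the quasi-geodesic condition it suffices to check ordered pairs. -/
theorem qg_of_le {L e : ℝ} {γ : ℝ → X} {s : Set ℝ}
    (h : ∀ t ∈ s, ∀ u ∈ s, t ≤ u →
      (1 / L) * |t - u| - e ≤ dist (γ t) (γ u) ∧ dist (γ t) (γ u) ≤ L * |t - u| + e) :
    IsQGOn L e γ s := by
  intro t ht u hu
  rcases le_total t u with h' | h'
  · exact h t ht u hu h'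
  · rw [dist_comm, abs_sub_comm]
    exact h u hu t ht h'

/-- Reversal of a quasi-geodesic on `[a,b]`. -/
theorem qg_reverse {L e : ℝ} {q : ℝ → X} {a b : ℝ}
    (h : IsQGOn L e q (Icc a b)) :
    IsQGOn L e (fun r => q (a + b - r)) (Icc a b) := by
  intro t ht u hu
  have h' := h (a + b - t) ⟨by linarith [ht.2], by linarith [ht.1]⟩
      (a + b - u) ⟨by linarith [hu.2], by linarith [hu.1]⟩
  rwa [show a + b - t - (a + b - u) = u - t by ring, abs_sub_comm u t] at h'

/-- Key surgery lemma: if `c` is (up to `1`) a closest parameter of the quasi-geodesic `q`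
to the point `p`, then bridging from `p` to `q c` by a geodesic yields a `(3L, e+2)`-quasi-
geodesic, so if `p` and `q b` lie on a Morse path `γ`, all of `q` on `[c,b]` is close to `γ`. -/
theorem coverTail {M₀ : MorseGauge} {γ : ℝ → X} {S : Set ℝ}
    (hX : GeodesicSpace X) (hM : IsMorseOn M₀ γ S)
    {p : X} (hp : p ∈ γ '' S)
    {L e : ℝ} (hL : 1 ≤ L) (he : 0 ≤ e)
    {q : ℝ → X} {a b c : ℝ} (hac : a ≤ c) (hcb : c ≤ b)
    (hQG : IsQGOn L e q (Icc a b))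
    (hqb : q b ∈ γ '' S)
    (hmin : ∀ v ∈ Icc a b, dist p (q c) - 1 ≤ dist p (q v)) :
    ∀ r ∈ Icc c b, ∃ u ∈ S, dist (q r) (γ u) ≤ M₀ (3 * L) (e + 2) := by
  obtain ⟨g, hg0, hgl, hgeo⟩ := hX p (q c)
  set ℓ := dist p (q c) with hℓ
  have hl0 : 0 ≤ ℓ := dist_nonneg
  have hL0 : (0:ℝ) < L := by linarith
  have h3L : (0:ℝ) < 3 * L := by linarith
  set Q : ℝ → X := fun r => if r < c then g (r - (c - ℓ)) else q r with hQdef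
  have hQc : ∀ r, c ≤ r → Q r = q r := by
    intro r hr; simp only [hQdef]; rw [if_neg (not_lt.2 hr)]
  have hQg : ∀ r, r < c → Q r = g (r - (c - ℓ)) := by
    intro r hr; simp only [hQdef]; rw [if_pos hr]
  have hQQG : IsQGOn (3 * L) (e + 2) Q (Icc (c - ℓ) b) := by
    apply qg_of_le
    intro t ht u hu htu
    by_cases h1 : u < c
    · -- both on the geodesic bridge
      have h2 : t < c := lt_of_le_of_lt htu h1
      have hdist : dist (Q t) (Q u) = |t - u| := by
        rw [hQg t h2, hQg u h1,
          hgeo _ ⟨by linarith [ht.1], by linarith⟩ _ ⟨by linarith [hu.1], by linarith⟩]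
        congr 1; ring
      have habs : (0:ℝ) ≤ |t - u| := abs_nonneg _
      have h31 : (0:ℝ) ≤ 3 * L - 1 := by linarith
      have hsmall : 1 / (3 * L) * |t - u| ≤ |t - u| := by
        rw [div_mul_eq_mul_div, div_le_iff₀ h3L]
        linarith [mul_nonneg h31 habs]
      have hbig : |t - u| ≤ 3 * L * |t - u| := by linarith [mul_nonneg h31 habs]
      rw [hdist]
      constructor
      · linarith
      · linarith
    · by_cases h2 : t < c
      · -- mixed pair: bridge point vs quasi-geodesic point
        have hu' : u ∈ Icc a b := ⟨le_trans hac (not_lt.1 h1), hu.2⟩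
        have hc' : c ∈ Icc a b := ⟨hac, hcb⟩
        have hα0 : 0 ≤ u - c := by linarith [not_lt.1 h1]
        have hβ0 : 0 < c - t := by linarith
        have hβl : c - t ≤ ℓ := by linarith [ht.1]
        have hQt : Q t = g (t - (c - ℓ)) := hQg t h2
        have hQu : Q u = q u := hQc u (not_lt.1 h1)
        set α := u - c with hα
        set β := c - t with hβ
        have hpm : dist p (Q t) = ℓ - β := by
          rw [hQt, ← hg0, hgeo 0 ⟨le_refl 0, hl0⟩ _ ⟨by linarith [ht.1], by linarith⟩]
          rw [abs_of_nonpos (by simp only [hβ] at hβl ⊢; linarith)]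
          simp only [hβ]; ring
        have hmc : dist (Q t) (q c) = β := by
          rw [hQt, ← hgl, hgeo _ ⟨by linarith [ht.1], by linarith⟩ ℓ ⟨hl0, le_refl ℓ⟩]
          rw [abs_of_nonpos (by simp only [hβ] at hβl ⊢; linarith)]
          simp only [hβ]; ring
        have hcu := hQG c hc' u hu'
        have habs2 : |c - u| = α := by
          rw [abs_of_nonpos (by linarith)]; simp only [hα]; ring
        rw [habs2] at hcu
        have hpu : ℓ - 1 ≤ dist p (q u) := hmin u hu'
        have htri1 := dist_triangle p (Q t) (q u)
        have htri2 := dist_triangle (q c) (Q t) (q u)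
        have htri3 := dist_triangle (Q t) (q c) (q u)
        rw [dist_comm (q c) (Q t), hmc] at htri2
        rw [hmc] at htri3
        rw [hpm] at htri1
        have hd0 : 0 ≤ dist (Q t) (q u) := dist_nonneg
        have habs : |t - u| = α + β := by
          rw [abs_of_nonpos (by linarith)]; simp only [hα, hβ]; ring
        rw [hQu, habs]
        set d := dist (Q t) (q u) with hdd
        have F1 : β - 1 ≤ d := by
          have := dist_triangle p (Q t) (q u)
          rw [hpm, ← hdd] at this; linarith
        have F2 : 1 / L * α - e - β ≤ d := by linarith [hcu.1]
        constructor
        · -- lower bound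
          have hsuff : α + β ≤ 3 * L * (d + (e + 2)) → 1 / (3 * L) * (α + β) - (e + 2) ≤ d := by
            intro hs
            have h' : 1 / (3 * L) * (α + β) ≤ 1 / (3 * L) * (3 * L * (d + (e + 2))) :=
              mul_le_mul_of_nonneg_left hs (by positivity)
            rw [← mul_assoc, one_div_mul_cancel (ne_of_gt h3L), one_mul] at h'
            linarith
          apply hsuff
          rcases le_total α (2 * L * β) with hcase | hcase
          · have h1' : β ≤ L * β := by
              linarith [mul_nonneg (sub_nonneg.2 hL) hβ0.le]
            have h2' : β ≤ d + e + 2 := by linarith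
            have h3' : 3 * L * β ≤ 3 * L * (d + (e + 2)) :=
              mul_le_mul_of_nonneg_left (by linarith) (by positivity)
            linarith
          · -- α ≥ 2Lβ
            have hα_le : α ≤ L * (e + β + d) := by
              have h1' : 1 / L * α ≤ e + β + d := by linarith
              have h2' : L * (1 / L * α) ≤ L * (e + β + d) :=
                mul_le_mul_of_nonneg_left h1' (le_of_lt hL0)
              rwa [← mul_assoc, mul_one_div_cancel (ne_of_gt hL0), one_mul] at h2'
            have h2β : 2 * β ≤ e + β + d := by
              have h2b : L * (2 * β) ≤ L * (e + β + d) := by linarith [hα_le, hcase]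
              exact le_of_mul_le_mul_left h2b hL0
            have hβed : β ≤ e + d := by linarith
            have hβL : L * β ≤ L * (e + d) := mul_le_mul_of_nonneg_left hβed (le_of_lt hL0)
            have hed : e + d ≤ L * (e + d) := by
              linarith [mul_nonneg (sub_nonneg.2 hL) (add_nonneg he hd0)]
            linarith [hα_le, hβL, hβed, hed, hL0.le]
        · -- upper bound
          have hb3 : β ≤ 3 * L * β := by
            linarith [mul_nonneg (show (0:ℝ) ≤ 3 * L - 1 by linarith) hβ0.le]
          have hLa : 0 ≤ L * α := mul_nonneg hL0.le hα0
          linarith [htri3, hcu.2, hb3, hLa]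
      · -- both on q
        have ht' : t ∈ Icc a b := ⟨le_trans hac (not_lt.1 h2), ht.2⟩
        have hu' : u ∈ Icc a b := ⟨le_trans hac (by linarith [not_lt.1 h2]), hu.2⟩
        have h := hQG t ht' u hu'
        rw [hQc t (not_lt.1 h2), hQc u (by linarith [not_lt.1 h2])]
        have habs : 0 ≤ |t - u| := abs_nonneg _
        have hmono : 1 / (3 * L) * |t - u| ≤ 1 / L * |t - u| := by
          apply mul_le_mul_of_nonneg_right _ habs
          apply one_div_le_one_div_of_le hL0; linarith
        have h2L : 0 ≤ 2 * L * |t - u| := by positivity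
        constructor
        · linarith [h.1]
        · linarith [h.2, h2L]
  have hstart : Q (c - ℓ) = p := by
    by_cases h : c - ℓ < c
    · rw [hQg _ h, show c - ℓ - (c - ℓ) = 0 by ring, hg0]
    · have hl : ℓ = 0 := by
        have := not_lt.1 h; linarith
      have hpq : p = q c := by
        apply eq_of_dist_eq_zero
        rw [← hℓ, hl]
      rw [hQc _ (by linarith : c ≤ c - ℓ), show c - ℓ = c by linarith]
      exact hpq.symm
  have hend : Q b = q b := hQc b hcb
  have hmain := hM (3 * L) (e + 2) (by linarith) (by linarith) Q (c - ℓ) b (by linarith)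
    hQQG (by rw [hstart]; exact hp) (by rw [hend]; exact hqb)
  intro r hr
  obtain ⟨u, hu, hd⟩ := hmain r ⟨by linarith [hr.1], hr.2⟩
  exact ⟨u, hu, by rwa [hQc r hr.1] at hd⟩

/-- Mixed-endpoint case: a quasi-geodesic from a point of `ξ '' S₁` to a point of `ξ '' S₂`,
where `ξ T` lies on both pieces, stays near `ξ '' S₁ ∪ ξ '' S₂`. -/
theorem mixedCase {M₁ M₂ : MorseGauge} {ξ : ℝ → X} {S₁ S₂ : Set ℝ}
    (hX : GeodesicSpace X)
    (hM₁ : IsMorseOn M₁ ξ S₁) (hM₂ : IsMorseOn M₂ ξ S₂)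
    {T : ℝ} (hT1 : T ∈ S₁) (hT2 : T ∈ S₂)
    {L e : ℝ} (hL : 1 ≤ L) (he : 0 ≤ e)
    {η : ℝ → X} {a b : ℝ} (hab : a ≤ b)
    (hQG : IsQGOn L e η (Icc a b))
    (ha : η a ∈ ξ '' S₁) (hb : η b ∈ ξ '' S₂) :
    ∀ r ∈ Icc a b,
      (∃ u ∈ S₁, dist (η r) (ξ u) ≤ M₁ (3 * L) (e + 2)) ∨
      (∃ u ∈ S₂, dist (η r) (ξ u) ≤ M₂ (3 * L) (e + 2)) := by
  set D := (fun v => dist (ξ T) (η v)) '' Icc a b with hD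
  have hne : D.Nonempty := ⟨dist (ξ T) (η a), a, ⟨le_refl a, hab⟩, rfl⟩
  have hbdd : BddBelow D := ⟨0, by rintro x ⟨v, hv, rfl⟩; exact dist_nonneg⟩
  obtain ⟨d₀, hd₀D, hlt⟩ :=
    exists_lt_of_csInf_lt hne (lt_add_of_pos_right (sInf D) one_pos)
  obtain ⟨c, hc, hdc⟩ := hd₀D
  have hdc' : dist (ξ T) (η c) = d₀ := hdc
  have hmin : ∀ v ∈ Icc a b, dist (ξ T) (η c) - 1 ≤ dist (ξ T) (η v) := by
    intro v hv
    have h1 : sInf D ≤ dist (ξ T) (η v) := csInf_le hbdd ⟨v, hv, rfl⟩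
    linarith
  have hright := coverTail hX hM₂ ⟨T, hT2, rfl⟩ hL he hc.1 hc.2 hQG hb hmin
  have hminrev : ∀ v ∈ Icc a b,
      dist (ξ T) ((fun r => η (a + b - r)) (a + b - c)) - 1 ≤
        dist (ξ T) ((fun r => η (a + b - r)) v) := by
    intro v hv
    simp only
    rw [show a + b - (a + b - c) = c by ring]
    exact hmin (a + b - v) ⟨by linarith [hv.2], by linarith [hv.1]⟩
  have hleft := coverTail hX hM₁ ⟨T, hT1, rfl⟩ hL he
      (show a ≤ a + b - c by linarith [hc.2]) (show a + b - c ≤ b by linarith [hc.1])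
      (qg_reverse hQG)
      (show (fun r => η (a + b - r)) b ∈ ξ '' S₁ by
        simp only; rw [show a + b - b = a by ring]; exact ha)
      hminrev
  intro r hr
  rcases le_total r c with h | h
  · left
    have := hleft (a + b - r) ⟨by linarith, by linarith [hr.1]⟩
    simpa [show a + b - (a + b - r) = r by ring] using this
  · right
    exact hright r ⟨h, hr.2⟩

/-- if `ξ : [0,∞) → X` is a geodesic ray with `ξ|[0,T]` `M`-Morse and
`ξ|[T,∞)` `M'`-Morse, then `ξ` is `M''`-Morse where `M''` depends only on `M` and `M'`. -/
theorem stmt3 (M M' : MorseGauge) :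
    ∃ M'' : MorseGauge,
      ∀ (X : Type) (_ : MetricSpace X), GeodesicSpace X →
        ∀ (ξ : ℝ → X) (T : ℝ), 0 ≤ T →
          IsGeodesicOn ξ (Ici 0) →
          IsMorseOn M ξ (Icc 0 T) →
          IsMorseOn M' ξ (Ici T) →
          IsMorseOn M'' ξ (Ici 0) := by
  refine ⟨fun L e => max (max (M L e) (M' L e))
      (max (M (3 * L) (e + 2)) (M' (3 * L) (e + 2))), ?_⟩
  intro X instX hGS ξ T hT _hgeo hM hM' L e hL he η a b hab hQG ha hb r hr
  obtain ⟨s, hs, hsa⟩ := ha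
  obtain ⟨t, ht, htb⟩ := hb
  by_cases hsT : s ≤ T <;> by_cases htT : t ≤ T
  · -- both endpoints on ξ[0,T]
    obtain ⟨u, hu, hd⟩ := hM L e hL he η a b hab hQG
      ⟨s, ⟨hs, hsT⟩, hsa⟩ ⟨t, ⟨ht, htT⟩, htb⟩ r hr
    exact ⟨u, hu.1, le_trans hd (le_trans (le_max_left _ _) (le_max_left _ _))⟩
  · -- s ≤ T < t : mixed
    have hmix := mixedCase hGS hM hM' (show T ∈ Icc 0 T from ⟨hT, le_refl T⟩)
      (show T ∈ Ici T from le_refl T) hL he hab hQG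
      ⟨s, ⟨hs, hsT⟩, hsa⟩ ⟨t, le_of_lt (not_le.1 htT), htb⟩ r hr
    rcases hmix with ⟨u, hu, hd⟩ | ⟨u, hu, hd⟩
    · exact ⟨u, hu.1, le_trans hd (le_trans (le_max_left _ _) (le_max_right _ _))⟩
    · exact ⟨u, le_trans hT hu, le_trans hd (le_trans (le_max_right _ _) (le_max_right _ _))⟩
  · -- t ≤ T < s : mixed, reversed roles
    have hmix := mixedCase hGS hM' hM (show T ∈ Ici T from le_refl T)
      (show T ∈ Icc 0 T from ⟨hT, le_refl T⟩) hL he hab hQG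
      ⟨s, le_of_lt (not_le.1 hsT), hsa⟩ ⟨t, ⟨ht, htT⟩, htb⟩ r hr
    rcases hmix with ⟨u, hu, hd⟩ | ⟨u, hu, hd⟩
    · exact ⟨u, le_trans hT hu, le_trans hd (le_trans (le_max_right _ _) (le_max_right _ _))⟩
    · exact ⟨u, hu.1, le_trans hd (le_trans (le_max_left _ _) (le_max_right _ _))⟩
  · -- both endpoints on ξ[T,∞)
    obtain ⟨u, hu, hd⟩ := hM' L e hL he η a b hab hQG
      ⟨s, le_of_lt (not_le.1 hsT), hsa⟩ ⟨t, le_of_lt (not_le.1 htT), htb⟩ r hr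
    exact ⟨u, le_trans hT hu, le_trans hd (le_trans (le_max_right _ _) (le_max_left _ _))⟩
end

section
/- Let Γ be the Cayley graph of A∗B with Γ_A the embedded Cayley graph of A and π : Γ → Γ_A the natural projection. If γ : [a,b] → Γ is a continuous (λ,ε)-quasi-geodesic with endpoints in Γ_A, then π∘γ is a continuous (λ,ε)-quasi-geodesic in Γ_A, and the Hausdorff distance between γ and π∘γ is at most λ²ε + ε. -/
open Set Monoid

/-- A list of letters from `S ∪ S⁻¹`. -/
def IsWordOver {G : Type*} [Group G] (S : Set G) (l : List G) : Prop :=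
  ∀ x ∈ l, x ∈ S ∨ x⁻¹ ∈ S

/-- The word metric on `G` associated to the generating set `S`. -/
noncomputable def wordDist {G : Type*} [Group G] (S : Set G) (x y : G) : ℝ :=
  sInf {r : ℝ | ∃ l : List G, IsWordOver S l ∧ l.prod = x⁻¹ * y ∧ r = l.length}

section Discrete

variable {G : Type*}

/-- A discrete `(L,e)`-quasi-geodesic with respect to the distance function `d`,
parametrised over a set of integers. -/
def IsQGOnD (d : G → G → ℝ) (L e : ℝ) (γ : ℤ → G) (s : Set ℤ) : Prop :=
  ∀ i ∈ s, ∀ j ∈ s,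
    (1 / L) * |(i : ℝ) - (j : ℝ)| - e ≤ d (γ i) (γ j) ∧
      d (γ i) (γ j) ≤ L * |(i : ℝ) - (j : ℝ)| + e

/-- A discrete geodesic with respect to `d`. -/
def IsGeodesicOnD (d : G → G → ℝ) (γ : ℤ → G) (s : Set ℤ) : Prop :=
  ∀ i ∈ s, ∀ j ∈ s, d (γ i) (γ j) = |(i : ℝ) - (j : ℝ)|

/-- The discrete analogue of continuity: consecutive points are at distance at most `1`. -/
def IsContinuousD (d : G → G → ℝ) (γ : ℤ → G) (s : Set ℤ) : Prop :=
  ∀ i, i ∈ s → i + 1 ∈ s → d (γ i) (γ (i + 1)) ≤ 1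

/-- The (discrete) path `γ` on `s` is `M`-Morse w.r.t. `d`: every discrete
`(L,e)`-quasi-geodesic with endpoints on `γ` stays `M L e`-close to `γ`. -/
def IsMorseOnD (d : G → G → ℝ) (M : MorseGauge) (γ : ℤ → G) (s : Set ℤ) : Prop :=
  ∀ L e, 1 ≤ L → 0 ≤ e → ∀ (η : ℤ → G) (a b : ℤ), a ≤ b →
    IsQGOnD d L e η (Icc a b) → η a ∈ γ '' s → η b ∈ γ '' s →
    ∀ i ∈ Icc a b, ∃ j ∈ s, d (η i) (γ j) ≤ M L e

end Discrete

variable {A B : Type*} [Group A] [Group B]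

/-- A syllable viewed inside the free product `A ∗ B`. -/
def sylElem : A ⊕ B → Monoid.Coprod A B
  | Sum.inl a => Monoid.Coprod.inl a
  | Sum.inr b => Monoid.Coprod.inr b

/-- A list of syllables is alternating. -/
def AltList (l : List (A ⊕ B)) : Prop := l.Chain' (fun x y => x.isLeft ≠ y.isLeft)

/-- A reduced representation: alternating list of nontrivial syllables. -/
def ReducedList (l : List (A ⊕ B)) : Prop :=
  AltList l ∧ ∀ x ∈ l, x ≠ Sum.inl (1 : A) ∧ x ≠ Sum.inr (1 : B)

/-- `u ∈ A ∗ B` has a reduced representation starting with a nontrivial `B`-syllable. -/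
def startsWithB (u : Monoid.Coprod A B) : Prop :=
  ∃ (b : B) (l : List (A ⊕ B)),
    ReducedList (Sum.inr b :: l) ∧ ((Sum.inr b :: l).map sylElem).prod = u

/-- `C_a`: elements whose reduced representation properly begins with the `A`-syllable `a`. -/
def Cset (a : A) : Set (Monoid.Coprod A B) :=
  {w | ∃ u, startsWithB u ∧ w = Monoid.Coprod.inl a * u}

open Classical in
/-- The projection `π : A ∗ B → A`: the identity on `A`, and the separating element
`a` with `w ∈ C_a` otherwise. -/
noncomputable def projA (w : Monoid.Coprod A B) : A :=
  if h : ∃ a : A, Monoid.Coprod.inl a = w then h.choose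
  else if h' : ∃ a : A, w ∈ Cset a then h'.choose else 1

/-- The generating set of the free product `A ∗ B` induced by `S_A` and `S_B`. -/
def fpGens (SA : Set A) (SB : Set B) : Set (Monoid.Coprod A B) :=
  (fun a : A => (Monoid.Coprod.inl a : Monoid.Coprod A B)) '' SA ∪
    (fun b : B => (Monoid.Coprod.inr b : Monoid.Coprod A B)) '' SB

/-!
Every element of `A ∗ B` is either in `A` or of the form `c * u` with `u` a reduced word starting
with a `B`-syllable, and `π` sends it to `c`. Multiplying an element of `C_c` on the right by one
syllable either stays in `C_c` or lands exactly on `c`; so a syllable path that starts and ends in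
`A` and visits `C_c` at time `i` passes through `c` at times `k₁ ≤ i ≤ k₂`. The lower
quasi-geodesic bound at `k₁, k₂` gives `|k₁ - k₂| ≤ λε`, hence `d(γ i, c) ≤ λ²ε + ε`; and since
`Γ_A` is isometrically embedded, the same pair of times gives the lower bound for `π ∘ γ`. The upper
bounds hold because `π` is `1`-Lipschitz, which is checked one generator at a time.
-/

section WordMetric

variable {G : Type*} [Group G] {S : Set G}

lemma wordDist_nonneg (S : Set G) (x y : G) : 0 ≤ wordDist S x y :=
  Real.sInf_nonneg (by rintro r ⟨l, -, -, rfl⟩; positivity)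

lemma wordDist_le_length {l : List G} (hl : IsWordOver S l) {x y : G} (hp : l.prod = x⁻¹ * y) :
    wordDist S x y ≤ l.length :=
  csInf_le ⟨0, by rintro r ⟨l, -, -, rfl⟩; positivity⟩ ⟨l, hl, hp, rfl⟩

lemma wordDist_self (S : Set G) (x : G) : wordDist S x x = 0 := by
  have h := wordDist_le_length (S := S) (l := []) (by simp [IsWordOver]) (inv_mul_cancel x).symm
  exact le_antisymm (by simpa using h) (wordDist_nonneg S x x)

lemma wordDist_symm (S : Set G) (x y : G) : wordDist S x y = wordDist S y x := by
  suffices h : ∀ u v : G,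
      {r : ℝ | ∃ l : List G, IsWordOver S l ∧ l.prod = u⁻¹ * v ∧ r = l.length} ⊆
        {r | ∃ l : List G, IsWordOver S l ∧ l.prod = v⁻¹ * u ∧ r = l.length} by
    exact congrArg sInf ((h x y).antisymm (h y x))
  rintro u v r ⟨l, hl, hp, rfl⟩
  refine ⟨(l.map (·⁻¹)).reverse, ?_, ?_, by simp⟩
  · simp only [IsWordOver, List.mem_reverse, List.mem_map]
    rintro _ ⟨g, hg, rfl⟩
    simpa [or_comm] using hl g hg
  · rw [← List.prod_inv_reverse, hp]
    group

lemma exists_isWordOver_prod_eq (hS : Subgroup.closure S = ⊤) (g : G) :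
    ∃ l : List G, IsWordOver S l ∧ l.prod = g := by
  have hg : g ∈ (Subgroup.closure S).toSubmonoid := hS ▸ Subgroup.mem_top g
  rw [Subgroup.closure_toSubmonoid] at hg
  obtain ⟨l, hl, rfl⟩ := Submonoid.exists_list_of_mem_closure hg
  exact ⟨l, fun x hx => (hl x hx).imp id Set.mem_inv.1, rfl⟩

lemma exists_isWordOver_length_eq_wordDist (hS : Subgroup.closure S = ⊤) (x y : G) :
    ∃ l : List G, IsWordOver S l ∧ l.prod = x⁻¹ * y ∧ (l.length : ℝ) = wordDist S x y := by
  classical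
  have hne : ∃ n, ∃ l : List G, IsWordOver S l ∧ l.prod = x⁻¹ * y ∧ l.length = n := by
    obtain ⟨l, hl, hp⟩ := exists_isWordOver_prod_eq hS (x⁻¹ * y)
    exact ⟨_, l, hl, hp, rfl⟩
  obtain ⟨l, hl, hp, hlen⟩ := Nat.find_spec hne
  refine ⟨l, hl, hp, le_antisymm (le_csInf ⟨_, l, hl, hp, rfl⟩ ?_) (wordDist_le_length hl hp)⟩
  rintro r ⟨l', hl', hp', rfl⟩
  rw [hlen]
  exact_mod_cast Nat.find_min' hne ⟨l', hl', hp', rfl⟩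

lemma wordDist_triangle (hS : Subgroup.closure S = ⊤) (x y z : G) :
    wordDist S x z ≤ wordDist S x y + wordDist S y z := by
  obtain ⟨l₁, hl₁, hp₁, hlen₁⟩ := exists_isWordOver_length_eq_wordDist hS x y
  obtain ⟨l₂, hl₂, hp₂, hlen₂⟩ := exists_isWordOver_length_eq_wordDist hS y z
  have hp : (l₁ ++ l₂).prod = x⁻¹ * z := by rw [List.prod_append, hp₁, hp₂]; group
  calc wordDist S x z ≤ (l₁ ++ l₂).length :=
        wordDist_le_length (fun g hg => (List.mem_append.1 hg).elim (hl₁ g) (hl₂ g)) hp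
    _ = wordDist S x y + wordDist S y z := by
        rw [List.length_append, Nat.cast_add, hlen₁, hlen₂]

lemma eq_or_exists_mul_of_wordDist_le_one (hS : Subgroup.closure S = ⊤) {x y : G}
    (h : wordDist S x y ≤ 1) : y = x ∨ ∃ g, (g ∈ S ∨ g⁻¹ ∈ S) ∧ y = x * g := by
  obtain ⟨l, hl, hp, hlen⟩ := exists_isWordOver_length_eq_wordDist hS x y
  have hlen1 : l.length ≤ 1 := by exact_mod_cast hlen ▸ h
  rcases l with _ | ⟨g, _ | ⟨g', t⟩⟩
  · exact Or.inl (inv_mul_eq_one.1 hp.symm).symm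
  · refine Or.inr ⟨g, hl g List.mem_cons_self, ?_⟩
    rw [List.prod_singleton] at hp
    rw [hp, mul_inv_cancel_left]
  · simp at hlen1

end WordMetric

section HeadSide

variable {α β : Type*}

def headSide (l : List (α ⊕ β)) : Option Bool := l.head?.map Sum.isLeft

lemma headSide_append_of_ne_nil {l : List (α ⊕ β)} (h : l ≠ []) (l' : List (α ⊕ β)) :
    headSide (l ++ l') = headSide l := by
  rcases l with _ | ⟨x, l⟩
  · exact absurd rfl h
  · rfl

lemma headSide_append_singleton {y m : α ⊕ β} (h : m.isLeft = y.isLeft) (l : List (α ⊕ β)) :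
    headSide (l ++ [m]) = headSide (l ++ [y]) := by
  rcases l with _ | ⟨x, l⟩ <;> simp [headSide, h]

end HeadSide

section ReducedWords

def sylProd (l : List (A ⊕ B)) : Coprod A B := (l.map sylElem).prod

@[simp] lemma sylElem_inl (a : A) : sylElem (Sum.inl a : A ⊕ B) = Coprod.inl a := rfl

@[simp] lemma sylElem_inr (b : B) : sylElem (Sum.inr b : A ⊕ B) = Coprod.inr b := rfl

@[simp] lemma sylProd_nil : sylProd ([] : List (A ⊕ B)) = 1 := rfl

@[simp] lemma sylProd_cons (z : A ⊕ B) (l : List (A ⊕ B)) :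
    sylProd (z :: l) = sylElem z * sylProd l := List.prod_cons

@[simp] lemma sylProd_append (l l' : List (A ⊕ B)) :
    sylProd (l ++ l') = sylProd l * sylProd l' := by
  simp [sylProd]

lemma sylElem_eq_one_iff {z : A ⊕ B} : sylElem z = 1 ↔ z = Sum.inl 1 ∨ z = Sum.inr 1 := by
  rcases z with a | b
  · simpa using map_eq_one_iff _ Coprod.inl_injective
  · simpa using map_eq_one_iff _ Coprod.inr_injective

lemma exists_sylElem_mul_eq {y z : A ⊕ B} (h : y.isLeft = z.isLeft) :
    ∃ m : A ⊕ B, sylElem y * sylElem z = sylElem m ∧ m.isLeft = y.isLeft := by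
  rcases y with a | b <;> rcases z with s | t
  · exact ⟨Sum.inl (a * s), by simp, rfl⟩
  · simp at h
  · simp at h
  · exact ⟨Sum.inr (b * t), by simp, rfl⟩

lemma reducedList_iff {l : List (A ⊕ B)} :
    ReducedList l ↔ l.IsChain (fun x y => x.isLeft ≠ y.isLeft) ∧
      ∀ x ∈ l, x ≠ Sum.inl 1 ∧ x ≠ Sum.inr 1 :=
  Iff.rfl

lemma ReducedList.nil : ReducedList ([] : List (A ⊕ B)) := ⟨List.isChain_nil, by simp⟩

lemma ReducedList.of_cons {x : A ⊕ B} {l : List (A ⊕ B)} (h : ReducedList (x :: l)) :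
    ReducedList l :=
  ⟨h.1.tail, fun z hz => h.2 z (List.mem_cons_of_mem x hz)⟩

lemma reducedList_append_singleton_iff {l : List (A ⊕ B)} {y : A ⊕ B} :
    ReducedList (l ++ [y]) ↔
      ReducedList l ∧ sylElem y ≠ 1 ∧ ∀ x ∈ l.getLast?, x.isLeft ≠ y.isLeft := by
  rw [Ne, sylElem_eq_one_iff, not_or, reducedList_iff, reducedList_iff]
  simp only [List.isChain_append, List.isChain_singleton, List.mem_append, List.mem_singleton,
    List.head?_cons, Option.mem_def, Option.some.injEq, true_and, forall_eq', or_imp,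
    forall_and, forall_eq]
  tauto

lemma ReducedList.exists_append_mul_sylElem {l : List (A ⊕ B)} {y m : A ⊕ B}
    (h : ReducedList (l ++ [y])) (hm : m.isLeft = y.isLeft) :
    ∃ r, ReducedList r ∧ sylProd r = sylProd l * sylElem m ∧
      (r = [] ∨ headSide r = headSide (l ++ [y])) := by
  obtain ⟨hl, -, hlast⟩ := reducedList_append_singleton_iff.1 h
  by_cases hm1 : sylElem m = 1
  · refine ⟨l, hl, by rw [hm1, mul_one], ?_⟩
    rcases eq_or_ne l [] with hnil | hnil
    exacts [Or.inl hnil, Or.inr (headSide_append_of_ne_nil hnil _).symm]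
  · refine ⟨l ++ [m], ?_, by simp, Or.inr (headSide_append_singleton hm l)⟩
    exact reducedList_append_singleton_iff.2 ⟨hl, hm1, fun x hx => hm ▸ hlast x hx⟩

lemma ReducedList.exists_mul_sylElem {r : List (A ⊕ B)} (hr : ReducedList r) (z : A ⊕ B) :
    ∃ r', ReducedList r' ∧ sylProd r' = sylProd r * sylElem z ∧
      (r' = [] ∨ r = [] ∨ headSide r' = headSide r) := by
  by_cases hz : sylElem z = 1
  · exact ⟨r, hr, by rw [hz, mul_one], Or.inr (Or.inr rfl)⟩
  rcases List.eq_nil_or_concat r with rfl | ⟨l, y, rfl⟩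
  · exact ⟨[z], reducedList_append_singleton_iff.2 ⟨ReducedList.nil, hz, by simp⟩, by simp,
      Or.inr (Or.inl rfl)⟩
  rw [List.concat_eq_append] at hr ⊢
  by_cases hyz : y.isLeft = z.isLeft
  · obtain ⟨m, hm, hmy⟩ := exists_sylElem_mul_eq hyz
    obtain ⟨r', hr', hprod, hhead⟩ := hr.exists_append_mul_sylElem hmy
    exact ⟨r', hr', by rw [hprod, sylProd_append, sylProd_cons, sylProd_nil, mul_one, mul_assoc,
      hm], hhead.imp_right Or.inr⟩
  · refine ⟨l ++ [y] ++ [z], ?_, by simp [mul_assoc],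
      Or.inr (Or.inr (headSide_append_of_ne_nil (by simp) _))⟩
    exact reducedList_append_singleton_iff.2 ⟨hr, hz, by simpa using hyz⟩

lemma exists_reducedList_sylProd_eq (w : Coprod A B) : ∃ l, ReducedList l ∧ sylProd l = w := by
  obtain ⟨l, rfl⟩ : ∃ l : List (A ⊕ B), sylProd l = w := by
    induction w using Coprod.induction_on with
    | inl a => exact ⟨[Sum.inl a], by simp⟩
    | inr b => exact ⟨[Sum.inr b], by simp⟩
    | mul x y hx hy =>
      obtain ⟨l, rfl⟩ := hx
      obtain ⟨l', rfl⟩ := hy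
      exact ⟨l ++ l', sylProd_append l l'⟩
  induction l using List.reverseRecOn with
  | nil => exact ⟨[], ReducedList.nil, rfl⟩
  | append_singleton l z ih =>
    obtain ⟨r, hr, hrl⟩ := ih
    obtain ⟨r', hr', hprod, -⟩ := hr.exists_mul_sylElem z
    exact ⟨r', hr', by simp [hprod, hrl]⟩

end ReducedWords

section Uniqueness

universe u v

/- Uniqueness of reduced words is transported from Mathlib's normal form `CoprodI.Word`; the
`ULift`s put both factors into one universe. -/
abbrev SyllableGroups (α : Type u) (β : Type v) : Bool → Type (max u v) :=
  fun i => cond i (ULift.{v} α) (ULift.{u} β)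

instance {α : Type u} {β : Type v} [Group α] [Group β] : ∀ i, Group (SyllableGroups α β i)
  | true => inferInstanceAs (Group (ULift α))
  | false => inferInstanceAs (Group (ULift β))

def toSigma {α : Type u} {β : Type v} : α ⊕ β → Σ i, SyllableGroups α β i
  | Sum.inl a => ⟨true, ULift.up a⟩
  | Sum.inr b => ⟨false, ULift.up b⟩

lemma toSigma_injective {α : Type u} {β : Type v} :
    Function.Injective (toSigma (α := α) (β := β)) := by
  rintro (a | b) (a' | b') h <;> simp_all [toSigma]

lemma toSigma_fst {α : Type u} {β : Type v} (z : α ⊕ β) : (toSigma z).1 = z.isLeft := by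
  cases z <;> rfl

noncomputable def toCoprodI : Coprod A B →* CoprodI (SyllableGroups A B) :=
  Coprod.lift ((CoprodI.of (i := true)).comp MulEquiv.ulift.symm.toMonoidHom)
    ((CoprodI.of (i := false)).comp MulEquiv.ulift.symm.toMonoidHom)

lemma toCoprodI_sylElem (z : A ⊕ B) : toCoprodI (sylElem z) = CoprodI.of (toSigma z).2 := by
  cases z <;> rfl

def ReducedList.toWord {l : List (A ⊕ B)} (hl : ReducedList l) :
    CoprodI.Word (SyllableGroups A B) where
  toList := l.map toSigma
  ne_one := by
    simp only [List.mem_map]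
    rintro _ ⟨z, hz, rfl⟩
    rcases z with a | b
    · exact fun h => (hl.2 _ hz).1 (congrArg Sum.inl (congrArg ULift.down h))
    · exact fun h => (hl.2 _ hz).2 (congrArg Sum.inr (congrArg ULift.down h))
  chain_ne := by
    rw [List.isChain_map]
    exact hl.1.imp fun x y h => by rwa [toSigma_fst, toSigma_fst]

lemma ReducedList.prod_toWord {l : List (A ⊕ B)} (hl : ReducedList l) :
    hl.toWord.prod = toCoprodI (sylProd l) := by
  simp only [CoprodI.Word.prod, ReducedList.toWord, sylProd, map_list_prod, List.map_map]
  congr 1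
  exact List.map_congr_left fun z _ => (toCoprodI_sylElem z).symm

lemma ReducedList.eq_of_sylProd_eq {l l' : List (A ⊕ B)} (hl : ReducedList l)
    (hl' : ReducedList l') (h : sylProd l = sylProd l') : l = l' := by
  classical
  have hw : hl.toWord = hl'.toWord := CoprodI.Word.equiv.symm.injective <| by
    change hl.toWord.prod = hl'.toWord.prod
    rw [hl.prod_toWord, hl'.prod_toWord, h]
  exact List.map_injective_iff.2 toSigma_injective (congrArg CoprodI.Word.toList hw)

end Uniqueness

section Projection

open Classical in
noncomputable def prependA (c : A) (l : List (A ⊕ B)) : List (A ⊕ B) :=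
  if c = 1 then l else Sum.inl c :: l

lemma sylProd_prependA (c : A) (l : List (A ⊕ B)) :
    sylProd (prependA c l) = Coprod.inl c * sylProd l := by
  unfold prependA
  split_ifs with hc
  · rw [hc, map_one, one_mul]
  · rfl

lemma ReducedList.prependA {l : List (A ⊕ B)} (hl : ReducedList l)
    (hh : headSide l ≠ some true) (c : A) : ReducedList (prependA c l) := by
  unfold _root_.prependA
  split_ifs with hc
  · exact hl
  refine ⟨List.isChain_cons.2 ⟨fun y hy => ?_, hl.1⟩, ?_⟩
  · cases y <;> simp_all [headSide]
  · simp only [List.mem_cons, forall_eq_or_imp]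
    exact ⟨⟨by simpa using hc, by simp⟩, hl.2⟩

lemma eq_of_inl_mul_sylProd_eq {c c' : A} {l l' : List (A ⊕ B)} (hl : ReducedList l)
    (hl' : ReducedList l') (hh : headSide l ≠ some true) (hh' : headSide l' ≠ some true)
    (h : Coprod.inl c * sylProd l = Coprod.inl c' * sylProd l') : c = c' ∧ l = l' := by
  have key := (hl.prependA hh c).eq_of_sylProd_eq (hl'.prependA hh' c')
    (by rw [sylProd_prependA, sylProd_prependA, h])
  unfold prependA at key
  split_ifs at key with hc hc' hc'
  · exact ⟨hc.trans hc'.symm, key⟩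
  · simp [key, headSide] at hh
  · simp [← key, headSide] at hh'
  · simpa using key

lemma mem_Cset_iff {c : A} {w : Coprod A B} :
    w ∈ Cset c ↔ ∃ (b : B) (l : List (A ⊕ B)),
      ReducedList (Sum.inr b :: l) ∧ w = Coprod.inl c * sylProd (Sum.inr b :: l) := by
  constructor
  · rintro ⟨_, ⟨b, l, hl, rfl⟩, rfl⟩
    exact ⟨b, l, hl, rfl⟩
  · rintro ⟨b, l, hl, rfl⟩
    exact ⟨_, ⟨b, l, hl, rfl⟩, rfl⟩

lemma inl_not_mem_Cset (x c : A) : (Coprod.inl x : Coprod A B) ∉ Cset c := by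
  rw [mem_Cset_iff]
  rintro ⟨b, l, hl, h⟩
  have key := eq_of_inl_mul_sylProd_eq hl ReducedList.nil (by simp [headSide])
    (by simp [headSide]) (c' := x) (by rw [← h, sylProd_nil, mul_one])
  exact List.cons_ne_nil _ _ key.2

lemma eq_of_mem_Cset_of_mem_Cset {w : Coprod A B} {c c' : A} (h : w ∈ Cset c)
    (h' : w ∈ Cset c') : c = c' := by
  obtain ⟨b, l, hl, rfl⟩ := mem_Cset_iff.1 h
  obtain ⟨b', l', hl', he⟩ := mem_Cset_iff.1 h'
  exact (eq_of_inl_mul_sylProd_eq hl hl' (by simp [headSide]) (by simp [headSide]) he).1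

lemma eq_inl_or_mem_Cset (w : Coprod A B) : (∃ x, w = Coprod.inl x) ∨ ∃ c, w ∈ Cset c := by
  obtain ⟨l, hl, rfl⟩ := exists_reducedList_sylProd_eq w
  match l, hl with
  | [], _ => exact Or.inl ⟨1, by simp⟩
  | [Sum.inl x], _ => exact Or.inl ⟨x, by simp⟩
  | Sum.inl _ :: Sum.inl _ :: _, hl => exact absurd (List.isChain_cons_cons.1 hl.1).1 (by simp)
  | Sum.inl x :: Sum.inr b :: l, hl => exact Or.inr ⟨x, mem_Cset_iff.2 ⟨b, l, hl.of_cons, rfl⟩⟩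
  | Sum.inr b :: l, hl => exact Or.inr ⟨1, mem_Cset_iff.2 ⟨b, l, hl, by rw [map_one, one_mul]⟩⟩

lemma projA_inl (x : A) : projA (Coprod.inl x : Coprod A B) = x := by
  have h : ∃ a : A, (Coprod.inl a : Coprod A B) = Coprod.inl x := ⟨x, rfl⟩
  rw [projA, dif_pos h]
  exact Coprod.inl_injective h.choose_spec

lemma projA_of_mem_Cset {w : Coprod A B} {c : A} (hw : w ∈ Cset c) : projA w = c := by
  have h : ¬∃ a : A, Coprod.inl a = w := by
    rintro ⟨a, rfl⟩
    exact inl_not_mem_Cset a c hw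
  have h' : ∃ a : A, w ∈ Cset a := ⟨c, hw⟩
  rw [projA, dif_neg h, dif_pos h']
  exact eq_of_mem_Cset_of_mem_Cset h'.choose_spec hw

lemma mul_sylElem_mem_Cset_or_eq_inl {w : Coprod A B} {c : A} (hw : w ∈ Cset c) (z : A ⊕ B) :
    w * sylElem z ∈ Cset c ∨ w * sylElem z = Coprod.inl c := by
  obtain ⟨b, l, hl, rfl⟩ := mem_Cset_iff.1 hw
  obtain ⟨r, hr, hprod, hhead⟩ := hl.exists_mul_sylElem z
  rw [mul_assoc, ← hprod]
  rcases hhead with rfl | hnil | hhead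
  · exact Or.inr (by rw [sylProd_nil, mul_one])
  · exact absurd hnil (List.cons_ne_nil _ _)
  · rcases r with _ | ⟨_ | b', r⟩
    · simp [headSide] at hhead
    · simp [headSide] at hhead
    · exact Or.inl (mem_Cset_iff.2 ⟨b', r, hr, rfl⟩)

lemma inl_mul_inr_mem_Cset (x : A) {t : B} (ht : t ≠ 1) :
    (Coprod.inl x * Coprod.inr t : Coprod A B) ∈ Cset x :=
  mem_Cset_iff.2 ⟨t, [], (reducedList_append_singleton_iff (l := [])).2
    ⟨ReducedList.nil, by rwa [sylElem_inr, Ne, map_eq_one_iff _ Coprod.inr_injective], by simp⟩,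
    by simp⟩

lemma projA_mul_sylElem (w : Coprod A B) (z : A ⊕ B) :
    projA (w * sylElem z) = projA w ∨
      ∃ s, z = Sum.inl s ∧ projA (w * sylElem z) = projA w * s := by
  rcases eq_inl_or_mem_Cset w with ⟨x, rfl⟩ | ⟨c, hc⟩
  · rcases z with s | t
    · exact Or.inr ⟨s, rfl, by rw [sylElem_inl, ← map_mul, projA_inl, projA_inl]⟩
    · left
      rcases eq_or_ne t 1 with rfl | ht
      · rw [sylElem_inr, map_one, mul_one]
      · rw [sylElem_inr, projA_of_mem_Cset (inl_mul_inr_mem_Cset x ht), projA_inl]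
  · left
    rw [projA_of_mem_Cset hc]
    rcases mul_sylElem_mem_Cset_or_eq_inl hc z with h | h
    · exact projA_of_mem_Cset h
    · rw [h, projA_inl]

end Projection

section Lipschitz

variable {SA : Set A} {SB : Set B}

lemma closure_fpGens_eq_top (hSA : Subgroup.closure SA = ⊤) (hSB : Subgroup.closure SB = ⊤) :
    Subgroup.closure (fpGens SA SB) = ⊤ := by
  rw [fpGens, Subgroup.closure_union]
  change Subgroup.closure (Coprod.inl '' SA) ⊔ Subgroup.closure (Coprod.inr '' SB) = ⊤
  rw [← MonoidHom.map_closure, ← MonoidHom.map_closure, hSA, hSB, ← MonoidHom.range_eq_map,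
    ← MonoidHom.range_eq_map, Coprod.range_inl_sup_range_inr]

lemma exists_sylElem_of_letter {g : Coprod A B} (hg : g ∈ fpGens SA SB ∨ g⁻¹ ∈ fpGens SA SB) :
    ∃ z, g = sylElem z ∧ ∀ s, z = Sum.inl s → s ∈ SA ∨ s⁻¹ ∈ SA := by
  rcases hg with (⟨s, hs, rfl⟩ | ⟨t, -, rfl⟩) | (⟨s, hs, hinv⟩ | ⟨t, -, hinv⟩)
  · exact ⟨Sum.inl s, rfl, fun s' h => Sum.inl.inj h ▸ Or.inl hs⟩
  · exact ⟨Sum.inr t, rfl, by simp⟩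
  · refine ⟨Sum.inl s⁻¹, by rw [sylElem_inl, map_inv]; exact inv_eq_iff_eq_inv.1 hinv.symm,
      fun s' h => ?_⟩
    cases h
    exact Or.inr (by rwa [inv_inv])
  · exact ⟨Sum.inr t⁻¹, by rw [sylElem_inr, map_inv]; exact inv_eq_iff_eq_inv.1 hinv.symm, by simp⟩

lemma wordDist_projA_mul_le_one {g : Coprod A B} (hg : g ∈ fpGens SA SB ∨ g⁻¹ ∈ fpGens SA SB)
    (w : Coprod A B) : wordDist SA (projA w) (projA (w * g)) ≤ 1 := by
  obtain ⟨z, rfl, hz⟩ := exists_sylElem_of_letter hg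
  rcases projA_mul_sylElem w z with h | ⟨s, rfl, h⟩
  · rw [h, wordDist_self]
    exact zero_le_one
  · rw [h]
    simpa using wordDist_le_length (S := SA) (l := [s]) (by simpa [IsWordOver] using hz s rfl)
      (by simp)

lemma wordDist_projA_le (hSA : Subgroup.closure SA = ⊤) (hSB : Subgroup.closure SB = ⊤)
    (x y : Coprod A B) : wordDist SA (projA x) (projA y) ≤ wordDist (fpGens SA SB) x y := by
  obtain ⟨l, hl, hp, hlen⟩ :=
    exists_isWordOver_length_eq_wordDist (closure_fpGens_eq_top hSA hSB) x y
  obtain rfl : y = x * l.prod := by rw [hp, mul_inv_cancel_left]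
  rw [← hlen]
  clear hp hlen
  induction l generalizing x with
  | nil => simp [wordDist_self]
  | cons g l ih =>
    calc wordDist SA (projA x) (projA (x * (g :: l).prod))
        ≤ wordDist SA (projA x) (projA (x * g)) +
            wordDist SA (projA (x * g)) (projA (x * g * l.prod)) := by
          rw [List.prod_cons, ← mul_assoc]
          exact wordDist_triangle hSA _ _ _
      _ ≤ 1 + l.length := add_le_add (wordDist_projA_mul_le_one (hl g List.mem_cons_self) x)
          (ih _ fun h hh => hl h (List.mem_cons_of_mem g hh))
      _ = (g :: l).length := by simp [add_comm]

lemma wordDist_fpGens_inl (hSA : Subgroup.closure SA = ⊤) (hSB : Subgroup.closure SB = ⊤)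
    (x y : A) : wordDist (fpGens SA SB) (Coprod.inl x) (Coprod.inl y) = wordDist SA x y := by
  have hproj := wordDist_projA_le hSA hSB (Coprod.inl x) (Coprod.inl y)
  rw [projA_inl, projA_inl] at hproj
  refine le_antisymm ?_ hproj
  obtain ⟨l, hl, hp, hlen⟩ := exists_isWordOver_length_eq_wordDist hSA x y
  rw [← hlen, ← List.length_map (f := (Coprod.inl : A →* Coprod A B))]
  refine wordDist_le_length (fun g hg => ?_) (by rw [← map_list_prod, hp, map_mul, map_inv])
  obtain ⟨s, hs, rfl⟩ := List.mem_map.1 hg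
  rcases hl s hs with h | h
  · exact Or.inl (Or.inl ⟨s, h, rfl⟩)
  · exact Or.inr (Or.inl ⟨s⁻¹, h, map_inv _ _⟩)

end Lipschitz

section QuasiGeodesic

variable {G : Type*} {d : G → G → ℝ} {L e : ℝ} {γ : ℤ → G} {s : Set ℤ}

lemma IsQGOnD.abs_sub_le_of_eq (hqg : IsQGOnD d L e γ s) (hL : 0 < L) (hd : ∀ x, d x x = 0)
    {i j : ℤ} (hi : i ∈ s) (hj : j ∈ s) (h : γ i = γ j) : |(i : ℝ) - j| ≤ L * e := by
  have hlow := (hqg i hi j hj).1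
  rw [h, hd] at hlow
  rw [← div_le_iff₀' hL, div_eq_inv_mul, ← one_div]
  linarith

lemma IsQGOnD.lower_bound_of_subinterval (hqg : IsQGOnD d L e γ s) (hL : 0 < L) {i j k₁ k₂ : ℤ}
    (hk₁ : k₁ ∈ s) (hk₂ : k₂ ∈ s) (h₁ : k₁ ≤ i) (hij : i ≤ j) (h₂ : j ≤ k₂) :
    1 / L * |(i : ℝ) - j| - e ≤ d (γ k₁) (γ k₂) := by
  refine le_trans ?_ (hqg k₁ hk₁ k₂ hk₂).1
  have h₁ : (k₁ : ℝ) ≤ i := by exact_mod_cast h₁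
  have hij : (i : ℝ) ≤ j := by exact_mod_cast hij
  have h₂ : (j : ℝ) ≤ k₂ := by exact_mod_cast h₂
  have habs : |(i : ℝ) - j| ≤ |(k₁ : ℝ) - k₂| := by
    rw [abs_of_nonpos (by linarith), abs_of_nonpos (by linarith)]
    linarith
  have := mul_le_mul_of_nonneg_left habs (one_div_nonneg.2 hL.le)
  linarith

lemma IsQGOnD.dist_le_of_eq (hqg : IsQGOnD d L e γ s) (hL : 0 < L) (hd : ∀ x, d x x = 0)
    {i k₁ k₂ : ℤ} (hi : i ∈ s) (hk₁ : k₁ ∈ s) (hk₂ : k₂ ∈ s) (h₁ : k₁ ≤ i) (h₂ : i ≤ k₂)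
    (h : γ k₁ = γ k₂) : d (γ i) (γ k₁) ≤ L ^ 2 * e + e := by
  have h₁ : (k₁ : ℝ) ≤ i := by exact_mod_cast h₁
  have h₂ : (i : ℝ) ≤ k₂ := by exact_mod_cast h₂
  have hik : |(i : ℝ) - k₁| ≤ |(k₁ : ℝ) - k₂| := by
    rw [abs_of_nonneg (by linarith), abs_of_nonpos (by linarith)]
    linarith
  calc d (γ i) (γ k₁) ≤ L * |(i : ℝ) - k₁| + e := (hqg i hi k₁ hk₁).2
    _ ≤ L * (L * e) + e := by
        gcongr
        exact hik.trans (hqg.abs_sub_le_of_eq hL hd hk₁ hk₂ h)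
    _ = L ^ 2 * e + e := by ring

end QuasiGeodesic

section Paths

def IsSylPath (γ : ℤ → Coprod A B) (a b : ℤ) : Prop :=
  ∀ k, a ≤ k → k < b → ∃ z, γ (k + 1) = γ k * sylElem z

variable {γ : ℤ → Coprod A B} {a b i : ℤ} {c : A}

lemma isSylPath_of_isContinuousD {SA : Set A} {SB : Set B}
    (hgen : Subgroup.closure (fpGens SA SB) = ⊤)
    (h : IsContinuousD (wordDist (fpGens SA SB)) γ (Icc a b)) : IsSylPath γ a b := by
  intro k hak hkb
  rcases eq_or_exists_mul_of_wordDist_le_one hgen (h k ⟨hak, hkb.le⟩ ⟨by omega, by omega⟩)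
    with heq | ⟨g, hg, heq⟩
  · exact ⟨Sum.inl 1, by rw [heq, sylElem_inl, map_one, mul_one]⟩
  · obtain ⟨z, rfl, -⟩ := exists_sylElem_of_letter hg
    exact ⟨z, heq⟩

lemma exists_sylElem_eq_inv (z : A ⊕ B) : ∃ z', sylElem z' = (sylElem z)⁻¹ := by
  rcases z with a | b
  exacts [⟨Sum.inl a⁻¹, map_inv _ _⟩, ⟨Sum.inr b⁻¹, map_inv _ _⟩]

lemma IsSylPath.exists_le_eq_inl (hγ : IsSylPath γ a b) (ha : γ a ∉ Cset c)
    (hi : i ∈ Icc a b) (hic : γ i ∈ Cset c) : ∃ k ∈ Icc a i, γ k = Coprod.inl c := by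
  obtain ⟨hai, hib⟩ := hi
  induction i, hai using Int.leInduction with
  | base => exact absurd hic ha
  | succ n han ih =>
    obtain ⟨z, hz⟩ := hγ n han (by omega)
    obtain ⟨z', hz'⟩ := exists_sylElem_eq_inv z
    have hback : γ n = γ (n + 1) * sylElem z' := by rw [hz, hz', mul_inv_cancel_right]
    rcases mul_sylElem_mem_Cset_or_eq_inl hic z' with h | h
    · obtain ⟨k, ⟨hak, hkn⟩, hkc⟩ := ih (hback ▸ h) (by omega)
      exact ⟨k, ⟨hak, by omega⟩, hkc⟩
    · exact ⟨n, ⟨han, by omega⟩, hback ▸ h⟩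

lemma IsSylPath.exists_ge_eq_inl (hγ : IsSylPath γ a b) (hb : γ b ∉ Cset c)
    (hi : i ∈ Icc a b) (hic : γ i ∈ Cset c) : ∃ k ∈ Icc i b, γ k = Coprod.inl c := by
  obtain ⟨hai, hib⟩ := hi
  induction i, hib using Int.leInductionDown with
  | base => exact absurd hic hb
  | pred n hnb ih =>
    obtain ⟨z, hz⟩ := hγ (n - 1) hai (by omega)
    rw [sub_add_cancel] at hz
    rcases mul_sylElem_mem_Cset_or_eq_inl hic z with h | h
    · obtain ⟨k, ⟨hnk, hkb⟩, hkc⟩ := ih (hz ▸ h) (by omega)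
      exact ⟨k, ⟨by omega, hkb⟩, hkc⟩
    · exact ⟨n, ⟨by omega, hnb⟩, hz ▸ h⟩

lemma IsSylPath.exists_eq_inl_projA (hγ : IsSylPath γ a b) (ha : ∃ x, γ a = Coprod.inl x)
    (hb : ∃ y, γ b = Coprod.inl y) (hi : i ∈ Icc a b) :
    (∃ k ∈ Icc a i, γ k = Coprod.inl (projA (γ i))) ∧
      ∃ k ∈ Icc i b, γ k = Coprod.inl (projA (γ i)) := by
  rcases eq_inl_or_mem_Cset (γ i) with ⟨x, hx⟩ | ⟨c, hc⟩
  · rw [hx, projA_inl]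
    exact ⟨⟨i, ⟨hi.1, le_rfl⟩, hx⟩, ⟨i, ⟨le_rfl, hi.2⟩, hx⟩⟩
  · obtain ⟨⟨x, hx⟩, ⟨y, hy⟩⟩ := And.intro ha hb
    rw [projA_of_mem_Cset hc]
    exact ⟨hγ.exists_le_eq_inl (hx ▸ inl_not_mem_Cset x c) hi hc,
      hγ.exists_ge_eq_inl (hy ▸ inl_not_mem_Cset y c) hi hc⟩

end Paths

theorem stmt7_general (A B : Type*) [Group A] [Group B] (SA : Set A) (SB : Set B)
    (hSAgen : Subgroup.closure SA = ⊤) (hSBgen : Subgroup.closure SB = ⊤)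
    (L e : ℝ) (hL : 1 ≤ L)
    (a b : ℤ) (γ : ℤ → Monoid.Coprod A B)
    (hqg : IsQGOnD (wordDist (fpGens SA SB)) L e γ (Set.Icc a b))
    (hcont : IsContinuousD (wordDist (fpGens SA SB)) γ (Set.Icc a b))
    (hendA : (∃ x : A, γ a = Monoid.Coprod.inl x) ∧ ∃ y : A, γ b = Monoid.Coprod.inl y) :
    IsQGOnD (wordDist SA) L e (fun i => projA (γ i)) (Set.Icc a b) ∧
    IsContinuousD (wordDist SA) (fun i => projA (γ i)) (Set.Icc a b) ∧
    (∀ i ∈ Set.Icc a b,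
      wordDist (fpGens SA SB) (γ i) (Monoid.Coprod.inl (projA (γ i))) ≤ L ^ 2 * e + e) := by
  have hL0 : 0 < L := one_pos.trans_le hL
  have hγ := isSylPath_of_isContinuousD (closure_fpGens_eq_top hSAgen hSBgen) hcont
  have hhit : ∀ i ∈ Icc a b, _ := fun i hi => hγ.exists_eq_inl_projA hendA.1 hendA.2 hi
  have hlip := wordDist_projA_le hSAgen hSBgen
  refine ⟨fun i hi j hj => ⟨?_, (hlip _ _).trans (hqg i hi j hj).2⟩,
    fun i hi hi' => (hlip _ _).trans (hcont i hi hi'), fun i hi => ?_⟩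
  · wlog hij : i ≤ j generalizing i j
    · rw [wordDist_symm, abs_sub_comm]
      exact this j hj i hi (le_of_not_ge hij)
    obtain ⟨⟨k₁, hk₁, h₁⟩, -⟩ := hhit i hi
    obtain ⟨-, k₂, hk₂, h₂⟩ := hhit j hj
    rw [← wordDist_fpGens_inl hSAgen hSBgen, ← h₁, ← h₂]
    exact hqg.lower_bound_of_subinterval hL0 ⟨hk₁.1, hk₁.2.trans hi.2⟩
      ⟨hj.1.trans hk₂.1, hk₂.2⟩ hk₁.2 hij hk₂.1
  · obtain ⟨⟨k₁, hk₁, h₁⟩, k₂, hk₂, h₂⟩ := hhit i hi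
    rw [← h₁]
    exact hqg.dist_le_of_eq hL0 (wordDist_self _) hi ⟨hk₁.1, hk₁.2.trans hi.2⟩
      ⟨hi.1.trans hk₂.1, hk₂.2⟩ hk₁.2 hk₂.1 (h₁.trans h₂.symm)

/-- if `γ : [a,b] → Γ` is a continuous `(L,e)`-quasi-geodesic in the Cayley
graph of `A ∗ B` with endpoints in `Γ_A`, then `π ∘ γ` is a continuous `(L,e)`-quasi-geodesic
in `Γ_A` and the Hausdorff distance between `γ` and `π ∘ γ` is at most `L²e + e`. -/
theorem stmt7 (A B : Type*) [Group A] [Group B] (SA : Set A) (SB : Set B)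
    (hSAfin : SA.Finite) (hSBfin : SB.Finite)
    (hSAgen : Subgroup.closure SA = ⊤) (hSBgen : Subgroup.closure SB = ⊤)
    (L e : ℝ) (hL : 1 ≤ L) (he : 0 ≤ e)
    (a b : ℤ) (hab : a ≤ b) (γ : ℤ → Monoid.Coprod A B)
    (hqg : IsQGOnD (wordDist (fpGens SA SB)) L e γ (Set.Icc a b))
    (hcont : IsContinuousD (wordDist (fpGens SA SB)) γ (Set.Icc a b))
    (hendA : (∃ x : A, γ a = Monoid.Coprod.inl x) ∧ ∃ y : A, γ b = Monoid.Coprod.inl y) :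
    IsQGOnD (wordDist SA) L e (fun i => projA (γ i)) (Set.Icc a b) ∧
    IsContinuousD (wordDist SA) (fun i => projA (γ i)) (Set.Icc a b) ∧
    (∀ i ∈ Set.Icc a b,
      wordDist (fpGens SA SB) (γ i) (Monoid.Coprod.inl (projA (γ i))) ≤ L ^ 2 * e + e) :=
  stmt7_general A B SA SB hSAgen hSBgen L e hL a b γ hqg hcont hendA
end

section
/- Let X be a proper geodesic metric space, M a Morse gauge, z an M-Morse direction, and ξ, ζ two M-Morse geodesic rays from the basepoint e representing z. Then for n ≥ 12δ_M, any M-Morse geodesic ray γ from e with d(γ(t), ξ(t)) < δ_M for all t ∈ [0, n + 4δ_M] satisfies d(γ(t), ζ(t)) < δ_M for all t ∈ [0, n]. -/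
open Set

variable {X : Type*} [MetricSpace X]

/-- The constant `δ_M` associated to a Morse gauge `M`. -/
noncomputable def deltaM (M : MorseGauge) : ℝ :=
  max (4 * M 1 (2 * M 5 0) + 2 * M 5 0) (8 * M 3 0)

/-- A geodesic ray from the basepoint `e`. -/
def IsRayFrom (e : X) (γ : ℝ → X) : Prop :=
  γ 0 = e ∧ IsGeodesicOn γ (Ici 0)

lemma morse_nonneg {X : Type*} [MetricSpace X] (e : X) (M : MorseGauge)
    (ξ : ℝ → X) (hξ : IsRayFrom e ξ) (hξM : IsMorseOn M ξ (Ici 0)) :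
    0 ≤ M 3 0 := by
  have hQG : IsQGOn 3 0 (fun _ : ℝ => e) (Icc (0:ℝ) 0) := by
    intro t ht u hu
    obtain rfl : t = 0 := le_antisymm ht.2 ht.1
    obtain rfl : u = 0 := le_antisymm hu.2 hu.1
    simp
  have hmem : (fun _ : ℝ => e) (0:ℝ) ∈ ξ '' Ici 0 := ⟨0, mem_Ici.mpr le_rfl, hξ.1⟩
  obtain ⟨u, hu, hud⟩ := hξM 3 0 (by norm_num) le_rfl (fun _ => e) 0 0 le_rfl hQG hmem hmem 0
    (Set.mem_Icc.mpr ⟨le_rfl, le_rfl⟩)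
  have hu0 : (0:ℝ) ≤ u := mem_Ici.mp hu
  have hde : dist e (ξ u) = u := by
    rw [← hξ.1, hξ.2 0 (mem_Ici.mpr le_rfl) u hu, zero_sub, abs_neg, abs_of_nonneg hu0]
  linarith [hde ▸ hud]

lemma projP {X : Type*} [MetricSpace X] (hX : GeodesicSpace X) (e : X) (M : MorseGauge)
    (α β : ℝ → X) (hα : IsRayFrom e α) (hαM : IsMorseOn M α (Ici 0))
    (hβ : IsRayFrom e β) (T s : ℝ) (hT : 0 ≤ T) (hs : 0 ≤ s)
    (hsT : s ≤ T - dist (α T) (β T)) :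
    dist (β s) (α s) ≤ 2 * M 3 0 := by
  obtain ⟨hα0, hαg⟩ := hα
  obtain ⟨hβ0, hβg⟩ := hβ
  have hβd : ∀ a b : ℝ, 0 ≤ a → 0 ≤ b → dist (β a) (β b) = |a - b| := fun a b ha hb =>
    hβg a (mem_Ici.mpr ha) b (mem_Ici.mpr hb)
  have hαd : ∀ a b : ℝ, 0 ≤ a → 0 ≤ b → dist (α a) (α b) = |a - b| := fun a b ha hb =>
    hαg a (mem_Ici.mpr ha) b (mem_Ici.mpr hb)
  -- continuity of u ↦ dist (α T) (β u) on [0, T]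
  have hcont : ContinuousOn (fun u => dist (α T) (β u)) (Icc 0 T) := by
    apply Metric.continuousOn_iff.mpr
    intro b hb ε hε
    refine ⟨ε, hε, fun a ha hab => ?_⟩
    have h1 : |dist (α T) (β a) - dist (α T) (β b)| ≤ dist (β a) (β b) := by
      rw [dist_comm (α T) (β a), dist_comm (α T) (β b)]
      exact abs_dist_sub_le _ _ _
    have h2 : dist (β a) (β b) = |a - b| := hβd a b ha.1 hb.1
    rw [Real.dist_eq] at hab ⊢
    calc |dist (α T) (β a) - dist (α T) (β b)| ≤ |a - b| := h2 ▸ h1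
      _ < ε := hab
  obtain ⟨S, hSmem, hSmin⟩ := isCompact_Icc.exists_isMinOn ⟨0, left_mem_Icc.mpr hT⟩ hcont
  obtain ⟨hS0, hST⟩ := hSmem
  set B := dist (β S) (α T) with hBdef
  have hB0 : 0 ≤ B := dist_nonneg
  have hmin : ∀ u, 0 ≤ u → u ≤ T → B ≤ dist (α T) (β u) := by
    intro u hu0 huT
    have := hSmin (Set.mem_Icc.mpr ⟨hu0, huT⟩)
    simpa [hBdef, dist_comm] using this
  have hBT : B ≤ dist (α T) (β T) := hmin T hT le_rfl
  have hde_α : ∀ a : ℝ, 0 ≤ a → dist e (α a) = a := by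
    intro a ha
    rw [← hα0, hαd 0 a le_rfl ha]
    simp [abs_of_nonneg ha]
  have hde_β : ∀ a : ℝ, 0 ≤ a → dist e (β a) = a := by
    intro a ha
    rw [← hβ0, hβd 0 a le_rfl ha]
    simp [abs_of_nonneg ha]
  have hTSB : T ≤ S + B := by
    have h1 : dist e (α T) ≤ dist e (β S) + dist (β S) (α T) := dist_triangle _ _ _
    rw [hde_α T hT, hde_β S hS0] at h1
    linarith
  have hsS : s ≤ S := by linarith
  obtain ⟨g, hg0, hgB, hgeo⟩ := hX (β S) (α T)
  rw [← hBdef] at hgB hgeo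
  classical
  set η : ℝ → X := fun r => if r ≤ S then β r else g (r - S) with hηdef
  -- key estimate
  have key : ∀ u, 0 ≤ u → ∀ v, v ≤ S + B → u ≤ v →
      (1/3) * (v - u) ≤ dist (η u) (η v) ∧ dist (η u) (η v) ≤ v - u := by
    intro u hu0 v hv huv
    by_cases hvS : v ≤ S
    · have huS : u ≤ S := le_trans huv hvS
      have hd : dist (η u) (η v) = v - u := by
        simp only [hηdef, if_pos huS, if_pos hvS]
        rw [hβd u v hu0 (le_trans hu0 huv), abs_of_nonpos (by linarith)]
        ring
      constructor <;> rw [hd] <;> linarith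
    · push_neg at hvS
      have hvB : v - S ≤ B := by linarith
      have hvS0 : 0 ≤ v - S := by linarith
      have hgmem1 : (v - S) ∈ Icc (0:ℝ) B := ⟨hvS0, hvB⟩
      by_cases huS : u ≤ S
      · -- cross case
        have hηu : η u = β u := by simp only [hηdef, if_pos huS]
        have hηv : η v = g (v - S) := by simp only [hηdef, if_neg (not_le.mpr hvS)]
        rw [hηu, hηv]
        have d1 : dist (g (v - S)) (g B) = B - (v - S) := by
          rw [hgeo (v - S) hgmem1 B ⟨hB0, le_rfl⟩, abs_of_nonpos (by linarith)]; ring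
        have d2 : dist (β S) (g (v - S)) = v - S := by
          rw [← hg0, hgeo 0 ⟨le_rfl, hB0⟩ (v - S) hgmem1, zero_sub, abs_neg,
            abs_of_nonneg hvS0]
        have dβ : dist (β u) (β S) = S - u := by
          rw [hβd u S hu0 hS0, abs_of_nonpos (by linarith)]; ring
        have lb1 : v - S ≤ dist (β u) (g (v - S)) := by
          have h1 : B ≤ dist (α T) (β u) := hmin u hu0 (le_trans huS hST)
          have h2 : dist (α T) (β u) ≤ dist (α T) (g (v - S)) + dist (g (v - S)) (β u) :=
            dist_triangle _ _ _
          have h3 : dist (α T) (g (v - S)) = B - (v - S) := by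
            rw [← hgB, dist_comm]; exact d1
          rw [h3] at h2
          rw [dist_comm (β u) (g (v - S))]
          linarith
        have lb2 : (S - u) - (v - S) ≤ dist (β u) (g (v - S)) := by
          have h2 : dist (β u) (β S) ≤ dist (β u) (g (v - S)) + dist (g (v - S)) (β S) :=
            dist_triangle _ _ _
          rw [dβ, dist_comm (g (v - S)) (β S), d2] at h2
          linarith
        have ub : dist (β u) (g (v - S)) ≤ v - u := by
          have h2 : dist (β u) (g (v - S)) ≤ dist (β u) (β S) + dist (β S) (g (v - S)) :=
            dist_triangle _ _ _
          rw [dβ, d2] at h2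
          linarith
        constructor
        · linarith
        · exact ub
      · push_neg at huS
        have huS0 : 0 ≤ u - S := by linarith
        have huB : u - S ≤ B := by linarith
        have hηu : η u = g (u - S) := by simp only [hηdef, if_neg (not_le.mpr huS)]
        have hηv : η v = g (v - S) := by simp only [hηdef, if_neg (not_le.mpr hvS)]
        have hd : dist (η u) (η v) = v - u := by
          rw [hηu, hηv, hgeo (u - S) ⟨huS0, huB⟩ (v - S) hgmem1,
            abs_of_nonpos (by linarith)]
          ring
        constructor <;> rw [hd] <;> linarith
  have hQG : IsQGOn 3 0 η (Icc 0 (S + B)) := by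
    intro t ht u hu
    rcases le_total t u with h | h
    · obtain ⟨h1, h2⟩ := key t ht.1 u hu.2 h
      rw [abs_of_nonpos (by linarith : t - u ≤ 0)]
      constructor <;> linarith
    · obtain ⟨h1, h2⟩ := key u hu.1 t ht.2 h
      rw [dist_comm (η t) (η u), abs_of_nonneg (by linarith : 0 ≤ t - u)]
      constructor <;> linarith
  have h0mem : η 0 ∈ α '' Ici 0 := by
    refine ⟨0, mem_Ici.mpr le_rfl, ?_⟩
    simp only [hηdef, if_pos hS0]
    rw [hα0, hβ0]
  have hendmem : η (S + B) ∈ α '' Ici 0 := by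
    refine ⟨T, mem_Ici.mpr hT, ?_⟩
    by_cases hB : S + B ≤ S
    · have hBz : B = 0 := le_antisymm (by linarith) hB0
      simp only [hηdef, if_pos hB]
      have : β (S + B) = β S := by rw [hBz, add_zero]
      rw [this]
      have : dist (β S) (α T) = 0 := by rw [← hBdef, hBz]
      exact (dist_eq_zero.mp this).symm
    · simp only [hηdef, if_neg hB]
      rw [show S + B - S = B by ring, hgB]
  obtain ⟨u, hu, hud⟩ := hαM 3 0 (by norm_num) le_rfl η 0 (S + B) (by linarith) hQG
    h0mem hendmem s (Set.mem_Icc.mpr ⟨hs, by linarith⟩)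
  have hu0 : (0:ℝ) ≤ u := mem_Ici.mp hu
  have hηs : η s = β s := by simp only [hηdef, if_pos hsS]
  rw [hηs] at hud
  have habs : |u - s| ≤ dist (β s) (α u) := by
    have h1 : dist e (α u) ≤ dist e (β s) + dist (β s) (α u) := dist_triangle _ _ _
    have h2 : dist e (β s) ≤ dist e (α u) + dist (α u) (β s) := dist_triangle _ _ _
    rw [hde_α u hu0, hde_β s hs] at h1 h2
    rw [dist_comm (α u) (β s)] at h2
    rw [abs_le]
    constructor <;> linarith
  have h3 : dist (α u) (α s) = |u - s| := hαd u s hu0 hs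
  calc dist (β s) (α s) ≤ dist (β s) (α u) + dist (α u) (α s) := dist_triangle _ _ _
    _ ≤ M 3 0 + M 3 0 := by rw [h3]; exact add_le_add hud (le_trans habs hud)
    _ = 2 * M 3 0 := by ring

/-- let `ξ, ζ` be `M`-Morse geodesic rays from `e` representing the same
Morse direction (i.e. at bounded distance). For `n ≥ 12 δ_M`, any `M`-Morse geodesic ray
`γ` from `e` with `d(γ t, ξ t) < δ_M` on `[0, n + 4δ_M]` satisfies `d(γ t, ζ t) < δ_M`
on `[0, n]`. -/
theorem stmt11 {X : Type*} [MetricSpace X] [ProperSpace X] (hX : GeodesicSpace X)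
    (e : X) (M : MorseGauge) (ξ ζ γ : ℝ → X) (n : ℝ)
    (hξ : IsRayFrom e ξ) (hξM : IsMorseOn M ξ (Ici 0))
    (hζ : IsRayFrom e ζ) (hζM : IsMorseOn M ζ (Ici 0))
    (hsame : ∃ C, ∀ t ≥ (0 : ℝ), dist (ξ t) (ζ t) ≤ C)
    (hn : 12 * deltaM M ≤ n)
    (hγ : IsRayFrom e γ) (hγM : IsMorseOn M γ (Ici 0))
    (hclose : ∀ t ∈ Icc (0 : ℝ) (n + 4 * deltaM M), dist (γ t) (ξ t) < deltaM M) :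
    ∀ t ∈ Icc (0 : ℝ) n, dist (γ t) (ζ t) < deltaM M := by
  set δ := deltaM M with hδdef
  have hK0 : 0 ≤ M 3 0 := morse_nonneg e M ξ hξ hξM
  have hδK : 8 * M 3 0 ≤ δ := le_max_right _ _
  have hδ0 : 0 ≤ δ := by linarith
  have hn0 : 0 ≤ n := by linarith
  have hδpos : 0 < δ := by
    have h0 := hclose 0 (Set.mem_Icc.mpr ⟨le_rfl, by linarith⟩)
    rw [hγ.1, hξ.1, dist_self] at h0
    exact h0
  obtain ⟨C, hC⟩ := hsame
  have hC0 : 0 ≤ C := le_trans dist_nonneg (hC 0 le_rfl)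
  -- Step 1: ξ and ζ are 2 M(3,0)-close at time n + 4δ
  have hstep1 : dist (ξ (n + 4 * δ)) (ζ (n + 4 * δ)) ≤ 2 * M 3 0 := by
    refine projP hX e M ζ ξ hζ hζM hξ (n + 4 * δ + C) (n + 4 * δ) (by linarith) (by linarith) ?_
    have h := hC (n + 4 * δ + C) (by linarith)
    have : dist (ζ (n + 4 * δ + C)) (ξ (n + 4 * δ + C)) ≤ C := by
      rw [dist_comm]; exact h
    linarith
  -- Step 2: conclude via projection of γ onto ζ
  intro t ht
  obtain ⟨ht0, htn⟩ := ht
  have hclT := hclose (n + 4 * δ) (Set.mem_Icc.mpr ⟨by linarith, le_rfl⟩)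
  have hdζγ : dist (ζ (n + 4 * δ)) (γ (n + 4 * δ)) < δ + 2 * M 3 0 := by
    have h1 : dist (ζ (n + 4 * δ)) (γ (n + 4 * δ)) ≤
        dist (ζ (n + 4 * δ)) (ξ (n + 4 * δ)) + dist (ξ (n + 4 * δ)) (γ (n + 4 * δ)) :=
      dist_triangle _ _ _
    rw [dist_comm (ζ (n + 4 * δ)) (ξ (n + 4 * δ)), dist_comm (ξ (n + 4 * δ)) (γ (n + 4 * δ))] at h1
    linarith
  have hfinal : dist (γ t) (ζ t) ≤ 2 * M 3 0 := by
    refine projP hX e M ζ γ hζ hζM hγ (n + 4 * δ) t (by linarith) ht0 ?_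
    linarith
  linarith
end

section
/- Let X be a proper geodesic metric space with basepoint e, M a Morse gauge, and z an M-Morse direction. For any integer l there exists an integer k such that for all y ∈ Û_{M,k}(z) one has Û_{M,k}(y) ⊂ Û_{M,l}(z); moreover k = max{l + 4δ_M, 12δ_M} works. -/
open Set

variable {X : Type*} [MetricSpace X]

/-- `η` is an `M`-Morse realization of the target `w` (a point of `X`, or a Morse
direction given by a ray): a geodesic from `e` to the point, resp. an `M`-Morse ray from
`e` at bounded distance from the given ray. -/
def RealizesR (M : MorseGauge) (e : X) (w : X ⊕ (ℝ → X)) (η : ℝ → X) : Prop :=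
  match w with
  | Sum.inl x => η 0 = e ∧ η (dist e x) = x ∧ IsGeodesicOn η (Icc 0 (dist e x)) ∧
      IsMorseOn M η (Icc 0 (dist e x))
  | Sum.inr ξ => IsRayFrom e η ∧ IsMorseOn M η (Ici 0) ∧
      ∃ C, ∀ t ≥ (0 : ℝ), dist (η t) (ξ t) ≤ C

/-- For a point target, membership in a `k`-neighbourhood requires `d(e,x) ≥ k`. -/
def domOK (e : X) (w : X ⊕ (ℝ → X)) (k : ℝ) : Prop :=
  match w with
  | Sum.inl x => k ≤ dist e x
  | Sum.inr _ => True

/-- `y ∈ Û_{M,k}(z)`: `y` has an `M`-Morse realization which `δ_M`-fellow-travels every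
`M`-Morse realization of `z` up to time `k`. -/
def FilledMemR (M : MorseGauge) (e : X) (k : ℝ) (z y : X ⊕ (ℝ → X)) : Prop :=
  domOK e y k ∧ ∃ η, RealizesR M e y η ∧
    ∀ ξ, RealizesR M e z ξ → ∀ t ∈ Icc 0 k, dist (η t) (ξ t) < deltaM M

/-- Core geometric lemma (Cordes Cor. 2.5 style): if `ξ` is an `M`-Morse geodesic ray
from `e` and `η` is a geodesic from `e` (defined at least on `[0,k]`) with
`dist (η k) (ξ k) < 2δ`, then for `t ≤ k - 4δ` we have `dist (η t) (ξ t) < δ`,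
provided `8 M(3,0) ≤ δ` and `0 < δ`. -/
lemma core_fellow {X : Type*} [MetricSpace X] (hX : GeodesicSpace X)
    (e : X) (M : MorseGauge) (ξ η : ℝ → X) (k δ t : ℝ)
    (hξ0 : ξ 0 = e) (hξg : IsGeodesicOn ξ (Ici 0)) (hξM : IsMorseOn M ξ (Ici 0))
    (hη0 : η 0 = e) (hηg : IsGeodesicOn η (Icc 0 k))
    (hδpos : 0 < δ) (hδ3 : 8 * M 3 0 ≤ δ)
    (ht0 : 0 ≤ t) (htk : t + 4 * δ ≤ k)
    (hend : dist (η k) (ξ k) < 2 * δ) :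
    dist (η t) (ξ t) < δ := by
  classical
  have hk0 : (0:ℝ) ≤ k := by linarith
  have htk' : t ≤ k := by linarith
  set x := ξ k with hx
  -- nearest-point projection of x to the segment η([0,k])
  have hηlip : LipschitzOnWith 1 η (Icc 0 k) := by
    rw [lipschitzOnWith_iff_dist_le_mul]
    intro s hs u hu
    rw [hηg s hs u hu, Real.dist_eq]
    simp
  have hcont : ContinuousOn (fun S => dist x (η S)) (Icc 0 k) :=
    (continuous_const.dist continuous_id).comp_continuousOn hηlip.continuousOn
  obtain ⟨T, hTmem, hTmin⟩ :=
    isCompact_Icc.exists_isMinOn (nonempty_Icc.mpr hk0) hcont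
  have hTmin' : ∀ S ∈ Icc (0:ℝ) k, dist (η T) x ≤ dist (η S) x := by
    intro S hS
    have := (isMinOn_iff.mp hTmin) S hS
    rwa [dist_comm x (η T), dist_comm x (η S)] at this
  obtain ⟨ρ, hρ0, hρc, hρg⟩ := hX (η T) x
  set c := dist (η T) x with hc
  have hcnn : (0:ℝ) ≤ c := dist_nonneg
  have hck : c < 2 * δ := by
    have h1 := hTmin' k ⟨hk0, le_rfl⟩
    calc c ≤ dist (η k) x := h1
    _ < 2 * δ := hend
  -- auxiliary distance facts
  have hde : ∀ S, 0 ≤ S → S ≤ k → dist (η S) e = S := by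
    intro S h0 hk'
    rw [← hη0, hηg S ⟨h0, hk'⟩ 0 ⟨le_rfl, hk0⟩, sub_zero, abs_of_nonneg h0]
  have hdξ : ∀ u, 0 ≤ u → dist (ξ u) e = u := by
    intro u hu
    rw [← hξ0, hξg u hu 0 self_mem_Ici, sub_zero, abs_of_nonneg hu]
  have hkT : k - T ≤ c := by
    have h := abs_dist_sub_le (ξ k) (η T) e
    rw [hdξ k hk0, hde T hTmem.1 hTmem.2, dist_comm (ξ k) (η T)] at h
    have := le_abs_self (k - T)
    calc k - T ≤ |k - T| := this
    _ ≤ dist (η T) x := h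
  have hTt : t < T := by linarith
  -- the concatenated path Q
  set Q : ℝ → X := fun u => if u < T then η u else ρ (u - T) with hQdef
  have hQa : ∀ u, 0 ≤ u → u ≤ T → Q u = η u := by
    intro u h0 hT
    rcases lt_or_eq_of_le hT with h | h
    · simp only [hQdef]
      rw [if_pos h]
    · simp only [hQdef]
      rw [if_neg (by simp [h]), h, sub_self, hρ0]
  have hQb : ∀ u, T ≤ u → Q u = ρ (u - T) := by
    intro u hu
    simp only [hQdef]
    rw [if_neg (not_lt.mpr hu)]
  have hQG : IsQGOn 3 0 Q (Icc 0 (T + c)) := by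
    have key : ∀ p ∈ Icc (0:ℝ) (T + c), ∀ q ∈ Icc (0:ℝ) (T + c), p ≤ q →
        1 / 3 * |p - q| - 0 ≤ dist (Q p) (Q q) ∧ dist (Q p) (Q q) ≤ 3 * |p - q| + 0 := by
      intro p hp q hq hpq
      have habs : |p - q| = q - p := by
        rw [abs_sub_comm]; exact abs_of_nonneg (by linarith)
      rcases le_or_gt q T with hqT | hqT
      · -- both on η
        have hpT : p ≤ T := hpq.trans hqT
        rw [hQa p hp.1 hpT, hQa q (le_trans hp.1 hpq) hqT,
          hηg p ⟨hp.1, hpT.trans hTmem.2⟩ q ⟨le_trans hp.1 hpq, hqT.trans hTmem.2⟩]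
        constructor <;> [linarith [abs_nonneg (p - q)]; linarith [abs_nonneg (p - q)]]
      rcases le_or_gt T p with hpT | hpT
      · -- both on ρ
        rw [hQb p hpT, hQb q hqT.le,
          hρg (p - T) ⟨by linarith, by linarith [hp.2]⟩ (q - T) ⟨by linarith, by linarith [hq.2]⟩]
        have : p - T - (q - T) = p - q := by ring
        rw [this]
        constructor <;> [linarith [abs_nonneg (p - q)]; linarith [abs_nonneg (p - q)]]
      · -- mixed: p < T < q
        rw [hQa p hp.1 hpT.le, hQb q hqT.le]
        have hr0 : (0:ℝ) ≤ q - T := by linarith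
        have hrc : q - T ≤ c := by linarith [hq.2]
        have f1 : dist (η T) (ρ (q - T)) = q - T := by
          rw [← hρ0, hρg 0 ⟨le_rfl, hcnn⟩ (q - T) ⟨hr0, hrc⟩, zero_sub, abs_neg,
            abs_of_nonneg hr0]
        have f2 : dist (ρ (q - T)) x = c - (q - T) := by
          rw [← hρc, hρg (q - T) ⟨hr0, hrc⟩ c ⟨hcnn, le_rfl⟩, abs_sub_comm,
            abs_of_nonneg (by linarith)]
        have f3 : c ≤ dist (η p) x := hTmin' p ⟨hp.1, hpT.le.trans hTmem.2⟩
        have f4 : dist (η p) (η T) = T - p := by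
          rw [hηg p ⟨hp.1, hpT.le.trans hTmem.2⟩ T hTmem, abs_sub_comm,
            abs_of_nonneg (by linarith)]
        have tri1 : dist (η p) x ≤ dist (η p) (ρ (q - T)) + dist (ρ (q - T)) x :=
          dist_triangle _ _ _
        have tri2 : dist (η p) (η T) ≤ dist (η p) (ρ (q - T)) + dist (ρ (q - T)) (η T) :=
          dist_triangle _ _ _
        have tri3 : dist (η p) (ρ (q - T)) ≤ dist (η p) (η T) + dist (η T) (ρ (q - T)) :=
          dist_triangle _ _ _
        rw [dist_comm (ρ (q - T)) (η T)] at tri2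
        constructor
        · rcases le_or_gt (T - p) (2 * (q - T)) with h | h
          · -- dist ≥ q - T suffices
            have A : q - T ≤ dist (η p) (ρ (q - T)) := by linarith
            rw [habs]; linarith
          · have B : (T - p) - (q - T) ≤ dist (η p) (ρ (q - T)) := by linarith
            rw [habs]; linarith
        · rw [habs]; linarith
    intro p hp q hq
    rcases le_total p q with h | h
    · exact key p hp q hq h
    · obtain ⟨h1, h2⟩ := key q hq p hp h
      rw [dist_comm (Q p) (Q q), abs_sub_comm p q]
      exact ⟨h1, h2⟩
  -- apply Morseness of ξ to Q
  have hQ0 : Q 0 ∈ ξ '' Ici 0 := by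
    refine ⟨0, self_mem_Ici, ?_⟩
    rw [hQa 0 le_rfl hTmem.1, hη0, hξ0]
  have hQend : Q (T + c) ∈ ξ '' Ici 0 := by
    refine ⟨k, hk0, ?_⟩
    rw [hQb (T + c) (by linarith)]
    have : T + c - T = c := by ring
    rw [this, hρc]
  obtain ⟨u, hu0, hud⟩ :=
    hξM 3 0 (by norm_num) le_rfl Q 0 (T + c) (by linarith [hTmem.1]) hQG hQ0 hQend t
      ⟨ht0, by linarith⟩
  rw [hQa t ht0 hTt.le] at hud
  have hdt : dist (η t) e = t := hde t ht0 htk'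
  have hdu : dist (ξ u) e = u := hdξ u hu0
  have habs : |u - t| ≤ dist (η t) (ξ u) := by
    have h := abs_dist_sub_le (ξ u) (η t) e
    rw [hdu, hdt, dist_comm (ξ u) (η t)] at h
    exact h
  have hξut : dist (ξ u) (ξ t) = |u - t| := hξg u hu0 t ht0
  have tri : dist (η t) (ξ t) ≤ dist (η t) (ξ u) + dist (ξ u) (ξ t) := dist_triangle _ _ _
  rw [hξut] at tri
  linarith

/-- for every `l` there is `k` (namely `k = max (l + 4δ_M) (12δ_M)`) such
that for all `y ∈ Û_{M,k}(z)` we have `Û_{M,k}(y) ⊆ Û_{M,l}(z)`. -/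
theorem stmt12 {X : Type*} [MetricSpace X] [ProperSpace X] (hX : GeodesicSpace X)
    (e : X) (M : MorseGauge) (ζ : ℝ → X)
    (hζ : IsRayFrom e ζ) (hζM : IsMorseOn M ζ (Ici 0))
    (l : ℝ) (hl : 0 ≤ l) :
    ∃ k : ℝ, k = max (l + 4 * deltaM M) (12 * deltaM M) ∧
      ∀ y w : X ⊕ (ℝ → X),
        FilledMemR M e k (Sum.inr ζ) y →
        FilledMemR M e k y w →
        FilledMemR M e l (Sum.inr ζ) w := by
  classical
  have hζreal : RealizesR M e (Sum.inr ζ) ζ := ⟨hζ, hζM, ⟨0, fun t _ => by simp⟩⟩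
  have hM30 : 0 ≤ M 3 0 := by
    have hqg : IsQGOn 3 0 (fun _ => e) (Icc (0:ℝ) 0) := by
      intro t ht u hu
      have ht' : t = 0 := le_antisymm ht.2 ht.1
      have hu' : u = 0 := le_antisymm hu.2 hu.1
      subst ht'; subst hu'
      simp
    have himg : (fun _ : ℝ => e) 0 ∈ ζ '' Ici 0 := ⟨0, self_mem_Ici, hζ.1⟩
    obtain ⟨u, -, hud⟩ :=
      hζM 3 0 (by norm_num) le_rfl (fun _ => e) 0 0 le_rfl hqg himg himg 0 ⟨le_rfl, le_rfl⟩
    exact dist_nonneg.trans hud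
  have hδ3 : 8 * M 3 0 ≤ deltaM M := le_max_right _ _
  have hδnn : 0 ≤ deltaM M := by linarith
  refine ⟨max (l + 4 * deltaM M) (12 * deltaM M), rfl, ?_⟩
  set K := max (l + 4 * deltaM M) (12 * deltaM M) with hK
  have hKl : l + 4 * deltaM M ≤ K := le_max_left _ _
  have hK0 : (0:ℝ) ≤ K := le_trans (by linarith) hKl
  intro y w hy hw
  obtain ⟨hdy, ηy, hyr, hyc⟩ := hy
  obtain ⟨hdw, ηw, hwr, hwc⟩ := hw
  have hηy0 : ηy 0 = e := by
    cases y with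
    | inl x => exact hyr.1
    | inr r => exact hyr.1.1
  have hδpos : 0 < deltaM M := by
    have h := hyc ζ hζreal 0 ⟨le_rfl, hK0⟩
    rw [hηy0, hζ.1] at h
    simpa using h
  have hηw0 : ηw 0 = e := by
    cases w with
    | inl x => exact hwr.1
    | inr r => exact hwr.1.1
  have hηwg : IsGeodesicOn ηw (Icc 0 K) := by
    cases w with
    | inl x =>
      have hdw' : K ≤ dist e x := hdw
      exact fun s hs u hu => hwr.2.2.1 s ⟨hs.1, hs.2.trans hdw'⟩ u ⟨hu.1, hu.2.trans hdw'⟩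
    | inr r =>
      exact fun s hs u hu => hwr.1.2 s hs.1 u hu.1
  refine ⟨?_, ηw, hwr, ?_⟩
  · cases w with
    | inl x =>
      have hdw' : K ≤ dist e x := hdw
      show l ≤ dist e x
      linarith
    | inr r => trivial
  · intro ξ hξ t ht
    have h2 := hyc ξ hξ K ⟨hK0, le_rfl⟩
    have h1 := hwc ηy hyr K ⟨hK0, le_rfl⟩
    obtain ⟨⟨hξ0, hξg⟩, hξMo, -⟩ := hξ
    have hend : dist (ηw K) (ξ K) < 2 * deltaM M :=
      (dist_triangle (ηw K) (ηy K) (ξ K)).trans_lt (by linarith)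
    exact core_fellow hX e M ξ ηw K (deltaM M) t hξ0 hξg hξMo hηw0 hηwg hδpos hδ3 ht.1
      (by linarith [ht.2]) hend
end
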